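/- arXiv:1810.11750 — 13 statements merged into one kernel-verified Lean document; each statement's English description precedes it below -/
import Mathlib

section
/- Existence and uniqueness of the maximum match: There exists a unique ε-approximate match (X*,Y*) in (𝒳,𝒴) such that every ε-approximate match (X,Y) in (𝒳,𝒴) satisfies X ⊆ X* and Y ⊆ Y*. -/
variable {V : Type*} [DecidableEq V]

/-- `(X, Y)` is an ε-approximate match in `(𝒳, 𝒴)`. -/
def IsApproxMatch (d : ℕ) (ε : ℝ) (z : V → EuclideanSpace ℝ (Fin d))
    (𝒳 𝒴 X Y : Finset V) : Prop :=
  X ⊆ 𝒳 ∧ Y ⊆ 𝒴 ∧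
    (∀ x ∈ X, Metric.infDist (z x)
      (Submodule.span ℝ (z '' (Y : Set V)) : Set (EuclideanSpace ℝ (Fin d))) ≤ ε * ‖z x‖) ∧
    (∀ y ∈ Y, Metric.infDist (z y)
      (Submodule.span ℝ (z '' (X : Set V)) : Set (EuclideanSpace ℝ (Fin d))) ≤ ε * ‖z y‖)

/-- `infDist` to the span only decreases as the generating set grows. -/
lemma infDist_span_mono {d : ℕ} (w : EuclideanSpace ℝ (Fin d))
    {s t : Set (EuclideanSpace ℝ (Fin d))} (h : s ⊆ t) :
    Metric.infDist w (Submodule.span ℝ t : Set (EuclideanSpace ℝ (Fin d))) ≤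
      Metric.infDist w (Submodule.span ℝ s : Set (EuclideanSpace ℝ (Fin d))) := by
  apply Metric.infDist_le_infDist_of_subset
  · exact SetLike.coe_subset_coe.mpr (Submodule.span_mono h)
  · exact ⟨0, Submodule.zero_mem _⟩

/-- There exists a unique maximum ε-approximate match in `(𝒳, 𝒴)`. -/
theorem maximum_match_existsUnique (d : ℕ) (ε : ℝ) (hε0 : 0 ≤ ε) (hε1 : ε < 1)
    (z : V → EuclideanSpace ℝ (Fin d)) (𝒳 𝒴 : Finset V) (hdisj : Disjoint 𝒳 𝒴) :
    ∃! p : Finset V × Finset V,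
      IsApproxMatch d ε z 𝒳 𝒴 p.1 p.2 ∧
        ∀ X Y : Finset V, IsApproxMatch d ε z 𝒳 𝒴 X Y → X ⊆ p.1 ∧ Y ⊆ p.2 := by
  classical
  set Xs : Finset V := 𝒳.filter (fun x => ∃ X Y, IsApproxMatch d ε z 𝒳 𝒴 X Y ∧ x ∈ X) with hXs
  set Ys : Finset V := 𝒴.filter (fun y => ∃ X Y, IsApproxMatch d ε z 𝒳 𝒴 X Y ∧ y ∈ Y) with hYs
  have hsubX : ∀ X Y, IsApproxMatch d ε z 𝒳 𝒴 X Y → X ⊆ Xs := by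
    intro X Y h x hx
    exact Finset.mem_filter.mpr ⟨h.1 hx, X, Y, h, hx⟩
  have hsubY : ∀ X Y, IsApproxMatch d ε z 𝒳 𝒴 X Y → Y ⊆ Ys := by
    intro X Y h y hy
    exact Finset.mem_filter.mpr ⟨h.2.1 hy, X, Y, h, hy⟩
  have hmatch : IsApproxMatch d ε z 𝒳 𝒴 Xs Ys := by
    refine ⟨Finset.filter_subset _ _, Finset.filter_subset _ _, ?_, ?_⟩
    · intro x hx
      obtain ⟨-, X, Y, h, hxX⟩ := Finset.mem_filter.mp hx
      calc Metric.infDist (z x) (Submodule.span ℝ (z '' (Ys : Set V)) :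
              Set (EuclideanSpace ℝ (Fin d)))
          ≤ Metric.infDist (z x) (Submodule.span ℝ (z '' (Y : Set V)) :
              Set (EuclideanSpace ℝ (Fin d))) :=
            infDist_span_mono _ (Set.image_mono (by exact_mod_cast hsubY X Y h))
        _ ≤ ε * ‖z x‖ := h.2.2.1 x hxX
    · intro y hy
      obtain ⟨-, X, Y, h, hyY⟩ := Finset.mem_filter.mp hy
      calc Metric.infDist (z y) (Submodule.span ℝ (z '' (Xs : Set V)) :
              Set (EuclideanSpace ℝ (Fin d)))
          ≤ Metric.infDist (z y) (Submodule.span ℝ (z '' (X : Set V)) :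
              Set (EuclideanSpace ℝ (Fin d))) :=
            infDist_span_mono _ (Set.image_mono (by exact_mod_cast hsubX X Y h))
        _ ≤ ε * ‖z y‖ := h.2.2.2 y hyY
  refine ⟨(Xs, Ys), ⟨hmatch, fun X Y h => ⟨hsubX X Y h, hsubY X Y h⟩⟩, ?_⟩
  rintro ⟨X, Y⟩ ⟨hm, hmax⟩
  obtain ⟨h1, h2⟩ := hmax Xs Ys hmatch
  obtain ⟨h3, h4⟩ := hsubX X Y hm, hsubY X Y hm
  exact Prod.ext (Finset.Subset.antisymm (hsubX X Y hm) h1)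
    (Finset.Subset.antisymm (hsubY X Y hm) h2)
end

section
/- Decomposition Theorem: Every ε-approximate match (X,Y) in (𝒳,𝒴) can be expressed as a union of simple matches; that is, there exist finitely many simple matches (X̂_i, Ŷ_i) in (𝒳,𝒴) such that X = ⋃_i X̂_i and Y = ⋃_i Ŷ_i (for (X,Y) = (∅,∅) the empty union suffices). -/
variable {V : Type*} [DecidableEq V]

/-- `(X̂, Ŷ)` is a simple (ε-approximate) match in `(𝒳, 𝒴)`: it is a nonempty match that
cannot be written as a union of strictly smaller matches. -/
def IsSimpleMatch (d : ℕ) (ε : ℝ) (z : V → EuclideanSpace ℝ (Fin d))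
    (𝒳 𝒴 Xh Yh : Finset V) : Prop :=
  IsApproxMatch d ε z 𝒳 𝒴 Xh Yh ∧ (Xh ∪ Yh).Nonempty ∧
    ¬ ∃ 𝒮 : Finset (Finset V × Finset V),
        (∀ p ∈ 𝒮, IsApproxMatch d ε z 𝒳 𝒴 p.1 p.2 ∧ p.1 ∪ p.2 ⊂ Xh ∪ Yh) ∧
        𝒮.biUnion Prod.fst = Xh ∧ 𝒮.biUnion Prod.snd = Yh

/-- Decomposition Theorem: every ε-approximate match is a union of simple matches. -/
theorem decomposition_theorem (d : ℕ) (ε : ℝ) (hε0 : 0 ≤ ε) (hε1 : ε < 1)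
    (z : V → EuclideanSpace ℝ (Fin d)) (𝒳 𝒴 : Finset V) (hdisj : Disjoint 𝒳 𝒴)
    (X Y : Finset V) (h : IsApproxMatch d ε z 𝒳 𝒴 X Y) :
    ∃ 𝒮 : Finset (Finset V × Finset V),
      (∀ p ∈ 𝒮, IsSimpleMatch d ε z 𝒳 𝒴 p.1 p.2) ∧
      𝒮.biUnion Prod.fst = X ∧ 𝒮.biUnion Prod.snd = Y := by
  classical
  obtain ⟨n, hn⟩ : ∃ n, (X ∪ Y).card ≤ n := ⟨_, le_refl _⟩
  induction n generalizing X Y with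
  | zero =>
    have hXY : X ∪ Y = ∅ := Finset.card_eq_zero.mp (Nat.le_zero.mp hn)
    have hX : X = ∅ := Finset.subset_empty.mp (hXY ▸ Finset.subset_union_left)
    have hY : Y = ∅ := Finset.subset_empty.mp (hXY ▸ Finset.subset_union_right)
    exact ⟨∅, by simp, by simp [hX], by simp [hY]⟩
  | succ n ih =>
    by_cases hne : (X ∪ Y).Nonempty
    · by_cases hs : IsSimpleMatch d ε z 𝒳 𝒴 X Y
      · exact ⟨{(X, Y)}, by simpa using hs, by simp, by simp⟩
      · have hfam : ∃ 𝒮₀ : Finset (Finset V × Finset V),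
            (∀ p ∈ 𝒮₀, IsApproxMatch d ε z 𝒳 𝒴 p.1 p.2 ∧ p.1 ∪ p.2 ⊂ X ∪ Y) ∧
            𝒮₀.biUnion Prod.fst = X ∧ 𝒮₀.biUnion Prod.snd = Y := by
          by_contra hc
          exact hs ⟨h, hne, hc⟩
        obtain ⟨𝒮₀, h𝒮₀, hfst, hsnd⟩ := hfam
        choose! F hF1 hF2 hF3 using fun p (hp : p ∈ 𝒮₀) =>
          ih p.1 p.2 ((h𝒮₀ p hp).1) (by
            have := Finset.card_lt_card (h𝒮₀ p hp).2
            omega)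
        refine ⟨𝒮₀.biUnion F, ?_, ?_, ?_⟩
        · intro q hq
          obtain ⟨p, hp, hq⟩ := Finset.mem_biUnion.mp hq
          exact hF1 p hp q hq
        · rw [Finset.biUnion_biUnion, ← hfst]
          exact Finset.biUnion_congr rfl fun p hp => hF2 p hp
        · rw [Finset.biUnion_biUnion, ← hsnd]
          exact Finset.biUnion_congr rfl fun p hp => hF3 p hp
    · have hXY : X ∪ Y = ∅ := Finset.not_nonempty_iff_eq_empty.mp hne
      have hX : X = ∅ := Finset.subset_empty.mp (hXY ▸ Finset.subset_union_left)
      have hY : Y = ∅ := Finset.subset_empty.mp (hXY ▸ Finset.subset_union_right)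
      exact ⟨∅, by simp, by simp [hX], by simp [hY]⟩
end

section
/- Intersection-Close Lemma: Assume (z_x)_{x ∈ 𝒳} and (z_y)_{y ∈ 𝒴} are both linearly independent families. If (X₁,Y₁) and (X₂,Y₂) are exact matches in (𝒳,𝒴), then (X₁ ∩ X₂, Y₁ ∩ Y₂) is also an exact match in (𝒳,𝒴). -/
variable {V : Type*} [DecidableEq V]

lemma span_image_inter {M : Type*} [AddCommGroup M] [Module ℝ M]
    (f : V → M) (s : Set V)
    (hli : LinearIndependent ℝ (fun x : s => f x.1)) {A B : Set V}
    (hA : A ⊆ s) (hB : B ⊆ s) :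
    Submodule.span ℝ (f '' (A ∩ B)) =
      Submodule.span ℝ (f '' A) ⊓ Submodule.span ℝ (f '' B) := by
  apply le_antisymm
  · exact le_inf (Submodule.span_mono (Set.image_mono Set.inter_subset_left))
      (Submodule.span_mono (Set.image_mono Set.inter_subset_right))
  · rintro v ⟨hvA, hvB⟩
    obtain ⟨l₁, hl₁, rfl⟩ := (Finsupp.mem_span_image_iff_linearCombination ℝ).1 hvA
    obtain ⟨l₂, hl₂, hl₂v⟩ := (Finsupp.mem_span_image_iff_linearCombination ℝ).1 hvB
    have hli' : ∀ l ∈ Finsupp.supported ℝ ℝ s,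
        Finsupp.linearCombination ℝ f l = 0 → l = 0 :=
      linearIndepOn_iff.1 hli
    have heq : l₁ = l₂ := by
      have hsub : l₁ - l₂ ∈ Finsupp.supported ℝ ℝ s :=
        Submodule.sub_mem _ (Finsupp.supported_mono hA hl₁)
          (Finsupp.supported_mono hB hl₂)
      have : Finsupp.linearCombination ℝ f (l₁ - l₂) = 0 := by
        rw [map_sub, hl₂v, sub_self]
      have := hli' _ hsub this
      exact sub_eq_zero.1 this
    refine (Finsupp.mem_span_image_iff_linearCombination ℝ).2 ⟨l₁, ?_, rfl⟩
    intro i hi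
    exact ⟨hl₁ hi, hl₂ (heq ▸ hi)⟩

/-- `(X, Y)` is an exact match in `(𝒳, 𝒴)`. -/
def IsExactMatch (d : ℕ) (z : V → EuclideanSpace ℝ (Fin d))
    (𝒳 𝒴 X Y : Finset V) : Prop :=
  X ⊆ 𝒳 ∧ Y ⊆ 𝒴 ∧
    Submodule.span ℝ (z '' (X : Set V)) = Submodule.span ℝ (z '' (Y : Set V))

/-- Intersection-Close Lemma: under linear independence, exact matches are closed under
componentwise intersection. -/
theorem intersection_close (d : ℕ) (z : V → EuclideanSpace ℝ (Fin d))
    (𝒳 𝒴 : Finset V) (hdisj : Disjoint 𝒳 𝒴)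
    (hliX : LinearIndependent ℝ (fun x : 𝒳 => z x.1))
    (hliY : LinearIndependent ℝ (fun y : 𝒴 => z y.1))
    (X₁ Y₁ X₂ Y₂ : Finset V)
    (h₁ : IsExactMatch d z 𝒳 𝒴 X₁ Y₁) (h₂ : IsExactMatch d z 𝒳 𝒴 X₂ Y₂) :
    IsExactMatch d z 𝒳 𝒴 (X₁ ∩ X₂) (Y₁ ∩ Y₂) := by
  obtain ⟨hX₁, hY₁, hspan₁⟩ := h₁
  obtain ⟨hX₂, hY₂, hspan₂⟩ := h₂
  refine ⟨(Finset.inter_subset_left).trans hX₁, (Finset.inter_subset_left).trans hY₁, ?_⟩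
  rw [Finset.coe_inter, Finset.coe_inter,
    span_image_inter z (𝒳 : Set V) hliX (Finset.coe_subset.2 hX₁) (Finset.coe_subset.2 hX₂),
    span_image_inter z (𝒴 : Set V) hliY (Finset.coe_subset.2 hY₁) (Finset.coe_subset.2 hY₂),
    hspan₁, hspan₂]
end

section
/- Assume (z_x)_{x ∈ 𝒳} and (z_y)_{y ∈ 𝒴} are both linearly independent families, and let (X*,Y*) be the maximum exact match in (𝒳,𝒴). Then for every v ∈ X* ∪ Y*, the v-minimum match is a simple match; and conversely, every simple exact match in (𝒳,𝒴) equals the v-minimum match for some neuron v ∈ X* ∪ Y*. -/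
variable {V : Type*} [DecidableEq V]

/-- `(X̂, Ŷ)` is a simple exact match in `(𝒳, 𝒴)`: a nonempty exact match that cannot be
written as a union of strictly smaller exact matches. -/
def IsSimpleExactMatch (d : ℕ) (z : V → EuclideanSpace ℝ (Fin d))
    (𝒳 𝒴 Xh Yh : Finset V) : Prop :=
  IsExactMatch d z 𝒳 𝒴 Xh Yh ∧ (Xh ∪ Yh).Nonempty ∧
    ¬ ∃ 𝒮 : Finset (Finset V × Finset V),
        (∀ p ∈ 𝒮, IsExactMatch d z 𝒳 𝒴 p.1 p.2 ∧ p.1 ∪ p.2 ⊂ Xh ∪ Yh) ∧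
        𝒮.biUnion Prod.fst = Xh ∧ 𝒮.biUnion Prod.snd = Yh

/-- `(Xv, Yv)` is the `v`-minimum exact match in `(𝒳, 𝒴)`. -/
def IsVMinimumMatch (d : ℕ) (z : V → EuclideanSpace ℝ (Fin d))
    (𝒳 𝒴 : Finset V) (v : V) (Xv Yv : Finset V) : Prop :=
  IsExactMatch d z 𝒳 𝒴 Xv Yv ∧ v ∈ Xv ∪ Yv ∧
    ∀ X Y : Finset V, IsExactMatch d z 𝒳 𝒴 X Y → v ∈ X ∪ Y → Xv ⊆ X ∧ Yv ⊆ Y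

open Submodule in
lemma span_image_inter_aux {d : ℕ} {z : V → EuclideanSpace ℝ (Fin d)} {𝒳 : Finset V}
    (hli : LinearIndependent ℝ (fun x : 𝒳 => z x.1))
    {A B : Finset V} (hA : A ⊆ 𝒳) (hB : B ⊆ 𝒳) :
    span ℝ (z '' ↑(A ∩ B)) = span ℝ (z '' (A : Set V)) ⊓ span ℝ (z '' (B : Set V)) := by
  have himg : ∀ C : Finset V, C ⊆ 𝒳 →
      z '' (C : Set V) = (fun x : 𝒳 => z x.1) '' (((Subtype.val : {x // x ∈ 𝒳} → V)) ⁻¹' (C : Set V)) := by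
    intro C hC; ext w; constructor
    · rintro ⟨a, ha, rfl⟩; exact ⟨⟨a, hC ha⟩, ha, rfl⟩
    · rintro ⟨a, ha, rfl⟩; exact ⟨a.1, ha, rfl⟩
  -- disjointness of spans
  have hpre : Disjoint (((Subtype.val : {x // x ∈ 𝒳} → V)) ⁻¹' ((A \ B : Finset V) : Set V))
      (((Subtype.val : {x // x ∈ 𝒳} → V)) ⁻¹' (B : Set V)) := by
    apply Disjoint.preimage
    rw [Set.disjoint_left]
    intro a ha hb
    simp only [Finset.coe_sdiff, Set.mem_diff, Finset.mem_coe] at ha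
    exact ha.2 hb
  have hdS : Disjoint (span ℝ (z '' ((A \ B : Finset V) : Set V)))
      (span ℝ (z '' (B : Set V))) := by
    rw [himg (A \ B) (fun a ha => hA (Finset.sdiff_subset ha)), himg B hB]
    exact hli.disjoint_span_image hpre
  apply le_antisymm
  · exact le_inf (span_mono (Set.image_mono (by exact_mod_cast Finset.inter_subset_left)))
      (span_mono (Set.image_mono (by exact_mod_cast Finset.inter_subset_right)))
  · intro x hx
    obtain ⟨hxA, hxB⟩ := Submodule.mem_inf.mp hx
    have hsplit : span ℝ (z '' (A : Set V)) =
        span ℝ (z '' ((A \ B : Finset V) : Set V)) ⊔ span ℝ (z '' ↑(A ∩ B)) := by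
      rw [← span_union, ← Set.image_union]
      congr 1
      rw [← Finset.coe_union, Finset.sdiff_union_inter]
    rw [hsplit] at hxA
    obtain ⟨a, ha, c, hc, rfl⟩ := Submodule.mem_sup.mp hxA
    have hcB : c ∈ span ℝ (z '' (B : Set V)) :=
      span_mono (Set.image_mono (by exact_mod_cast Finset.inter_subset_right)) hc
    have haB : a ∈ span ℝ (z '' (B : Set V)) := by
      have : a = (a + c) - c := (add_sub_cancel_right a c).symm
      rw [this]; exact Submodule.sub_mem _ hxB hcB
    have ha0 : a = 0 := Submodule.disjoint_def.mp hdS a ha haB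
    rw [ha0, zero_add]
    exact hc

lemma inter_exactMatch {d : ℕ} {z : V → EuclideanSpace ℝ (Fin d)} {𝒳 𝒴 : Finset V}
    (hliX : LinearIndependent ℝ (fun x : 𝒳 => z x.1))
    (hliY : LinearIndependent ℝ (fun y : 𝒴 => z y.1))
    {X₁ Y₁ X₂ Y₂ : Finset V}
    (h₁ : IsExactMatch d z 𝒳 𝒴 X₁ Y₁) (h₂ : IsExactMatch d z 𝒳 𝒴 X₂ Y₂) :
    IsExactMatch d z 𝒳 𝒴 (X₁ ∩ X₂) (Y₁ ∩ Y₂) := by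
  refine ⟨fun a ha => h₁.1 (Finset.inter_subset_left ha),
    fun a ha => h₁.2.1 (Finset.inter_subset_left ha), ?_⟩
  rw [span_image_inter_aux hliX h₁.1 h₂.1, span_image_inter_aux hliY h₁.2.1 h₂.2.1,
    h₁.2.2, h₂.2.2]

lemma exists_vMinimumMatch {d : ℕ} {z : V → EuclideanSpace ℝ (Fin d)} {𝒳 𝒴 : Finset V}
    (hdisj : Disjoint 𝒳 𝒴)
    (hliX : LinearIndependent ℝ (fun x : 𝒳 => z x.1))
    (hliY : LinearIndependent ℝ (fun y : 𝒴 => z y.1))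
    {v : V} {X₀ Y₀ : Finset V} (h₀ : IsExactMatch d z 𝒳 𝒴 X₀ Y₀) (hv : v ∈ X₀ ∪ Y₀) :
    ∃ Xv Yv : Finset V, IsVMinimumMatch d z 𝒳 𝒴 v Xv Yv := by
  classical
  set P : Set ℕ := {n | ∃ X Y : Finset V,
    IsExactMatch d z 𝒳 𝒴 X Y ∧ v ∈ X ∪ Y ∧ X.card + Y.card = n} with hP
  have hne : P.Nonempty := ⟨_, X₀, Y₀, h₀, hv, rfl⟩
  obtain ⟨X, Y, hXY, hvXY, hcard⟩ := Nat.sInf_mem hne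
  refine ⟨X, Y, hXY, hvXY, ?_⟩
  intro X' Y' hXY' hv'
  have hint := inter_exactMatch hliX hliY hXY hXY'
  have hvint : v ∈ (X ∩ X') ∪ (Y ∩ Y') := by
    rcases Finset.mem_union.mp hvXY with hX | hY
    · have hv𝒳 : v ∈ 𝒳 := hXY.1 hX
      have hX' : v ∈ X' := by
        rcases Finset.mem_union.mp hv' with h | h
        · exact h
        · exact absurd (hXY'.2.1 h) (Finset.disjoint_left.mp hdisj hv𝒳)
      exact Finset.mem_union_left _ (Finset.mem_inter.mpr ⟨hX, hX'⟩)
    · have hv𝒴 : v ∈ 𝒴 := hXY.2.1 hY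
      have hY' : v ∈ Y' := by
        rcases Finset.mem_union.mp hv' with h | h
        · exact absurd (hXY'.1 h) (Finset.disjoint_right.mp hdisj hv𝒴)
        · exact h
      exact Finset.mem_union_right _ (Finset.mem_inter.mpr ⟨hY, hY'⟩)
  have hle : sInf P ≤ (X ∩ X').card + (Y ∩ Y').card :=
    Nat.sInf_le ⟨X ∩ X', Y ∩ Y', hint, hvint, rfl⟩
  have h1 : (X ∩ X').card ≤ X.card := Finset.card_le_card Finset.inter_subset_left
  have h2 : (Y ∩ Y').card ≤ Y.card := Finset.card_le_card Finset.inter_subset_left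
  have hXeq : X ∩ X' = X :=
    Finset.eq_of_subset_of_card_le Finset.inter_subset_left (by omega)
  have hYeq : Y ∩ Y' = Y :=
    Finset.eq_of_subset_of_card_le Finset.inter_subset_left (by omega)
  constructor
  · rw [← hXeq]; exact Finset.inter_subset_right
  · rw [← hYeq]; exact Finset.inter_subset_right

/-- Under linear independence, the simple exact matches are exactly the `v`-minimum matches
for neurons `v` in the maximum exact match. -/
theorem simple_iff_vMinimum (d : ℕ) (z : V → EuclideanSpace ℝ (Fin d))
    (𝒳 𝒴 : Finset V) (hdisj : Disjoint 𝒳 𝒴)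
    (hliX : LinearIndependent ℝ (fun x : 𝒳 => z x.1))
    (hliY : LinearIndependent ℝ (fun y : 𝒴 => z y.1))
    (Xs Ys : Finset V)
    (hmax : IsExactMatch d z 𝒳 𝒴 Xs Ys ∧
      ∀ X Y : Finset V, IsExactMatch d z 𝒳 𝒴 X Y → X ⊆ Xs ∧ Y ⊆ Ys) :
    (∀ v ∈ Xs ∪ Ys, ∀ Xv Yv : Finset V,
        IsVMinimumMatch d z 𝒳 𝒴 v Xv Yv → IsSimpleExactMatch d z 𝒳 𝒴 Xv Yv) ∧
    (∀ Xh Yh : Finset V, IsSimpleExactMatch d z 𝒳 𝒴 Xh Yh →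
        ∃ v ∈ Xs ∪ Ys, IsVMinimumMatch d z 𝒳 𝒴 v Xh Yh) := by
  classical
  constructor
  · -- v-minimum matches are simple
    rintro v hv Xv Yv ⟨hexact, hvmem, hmin⟩
    refine ⟨hexact, ⟨v, hvmem⟩, ?_⟩
    rintro ⟨𝒮, h𝒮, hfst, hsnd⟩
    obtain ⟨p, hp, hvp⟩ : ∃ p ∈ 𝒮, v ∈ p.1 ∪ p.2 := by
      rcases Finset.mem_union.mp hvmem with h | h
      · rw [← hfst] at h
        obtain ⟨p, hp, hvp⟩ := Finset.mem_biUnion.mp h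
        exact ⟨p, hp, Finset.mem_union_left _ hvp⟩
      · rw [← hsnd] at h
        obtain ⟨p, hp, hvp⟩ := Finset.mem_biUnion.mp h
        exact ⟨p, hp, Finset.mem_union_right _ hvp⟩
    obtain ⟨hpexact, hpssub⟩ := h𝒮 p hp
    obtain ⟨hX, hY⟩ := hmin p.1 p.2 hpexact hvp
    exact absurd (Finset.union_subset_union hX hY) (by
      intro hsub
      exact (lt_irrefl _ (lt_of_lt_of_le hpssub hsub)))
  · -- simple matches are v-minimum matches
    rintro Xh Yh ⟨hexact, hne, hnosplit⟩
    have hchoice : ∀ v ∈ Xh ∪ Yh, ∃ p : Finset V × Finset V,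
        IsVMinimumMatch d z 𝒳 𝒴 v p.1 p.2 := by
      intro v hv
      obtain ⟨Xv, Yv, h⟩ := exists_vMinimumMatch hdisj hliX hliY hexact hv
      exact ⟨(Xv, Yv), h⟩
    choose! F hF using hchoice
    have hFsub : ∀ v ∈ Xh ∪ Yh, (F v).1 ⊆ Xh ∧ (F v).2 ⊆ Yh := by
      intro v hv
      exact (hF v hv).2.2 Xh Yh hexact hv
    -- membership of v in its own minimum match on the right side
    have hFmemX : ∀ v ∈ Xh, v ∈ (F v).1 := by
      intro v hv
      have hv' : v ∈ Xh ∪ Yh := Finset.mem_union_left _ hv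
      rcases Finset.mem_union.mp (hF v hv').2.1 with h | h
      · exact h
      · exact absurd ((hF v hv').1.2.1 h)
          (Finset.disjoint_left.mp hdisj (hexact.1 hv))
    have hFmemY : ∀ v ∈ Yh, v ∈ (F v).2 := by
      intro v hv
      have hv' : v ∈ Xh ∪ Yh := Finset.mem_union_right _ hv
      rcases Finset.mem_union.mp (hF v hv').2.1 with h | h
      · exact absurd ((hF v hv').1.1 h)
          (Finset.disjoint_right.mp hdisj (hexact.2.1 hv))
      · exact h
    have hbig : ∃ v ∈ Xh ∪ Yh, (F v).1 ∪ (F v).2 = Xh ∪ Yh := by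
      by_contra hcon
      push_neg at hcon
      apply hnosplit
      refine ⟨(Xh ∪ Yh).image F, ?_, ?_, ?_⟩
      · intro p hp
        obtain ⟨v, hv, rfl⟩ := Finset.mem_image.mp hp
        refine ⟨(hF v hv).1, ?_⟩
        refine (Finset.ssubset_iff_subset_ne).mpr ⟨?_, hcon v hv⟩
        exact Finset.union_subset_union (hFsub v hv).1 (hFsub v hv).2
      · apply Finset.Subset.antisymm
        · intro x hx
          obtain ⟨p, hp, hxp⟩ := Finset.mem_biUnion.mp hx
          obtain ⟨v, hv, rfl⟩ := Finset.mem_image.mp hp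
          exact (hFsub v hv).1 hxp
        · intro x hx
          exact Finset.mem_biUnion.mpr ⟨F x,
            Finset.mem_image_of_mem _ (Finset.mem_union_left _ hx), hFmemX x hx⟩
      · apply Finset.Subset.antisymm
        · intro y hy
          obtain ⟨p, hp, hyp⟩ := Finset.mem_biUnion.mp hy
          obtain ⟨v, hv, rfl⟩ := Finset.mem_image.mp hp
          exact (hFsub v hv).2 hyp
        · intro y hy
          exact Finset.mem_biUnion.mpr ⟨F y,
            Finset.mem_image_of_mem _ (Finset.mem_union_right _ hy), hFmemY y hy⟩
    obtain ⟨v, hv, heq⟩ := hbig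
    have hXeq : (F v).1 = Xh := by
      apply Finset.Subset.antisymm (hFsub v hv).1
      intro x hx
      have hx' : x ∈ (F v).1 ∪ (F v).2 := heq ▸ Finset.mem_union_left _ hx
      rcases Finset.mem_union.mp hx' with h | h
      · exact h
      · exact absurd ((hF v hv).1.2.1 h)
          (Finset.disjoint_left.mp hdisj (hexact.1 hx))
    have hYeq : (F v).2 = Yh := by
      apply Finset.Subset.antisymm (hFsub v hv).2
      intro y hy
      have hy' : y ∈ (F v).1 ∪ (F v).2 := heq ▸ Finset.mem_union_right _ hy
      rcases Finset.mem_union.mp hy' with h | h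
      · exact absurd ((hF v hv).1.1 h)
          (Finset.disjoint_right.mp hdisj (hexact.2.1 hy))
      · exact h
    refine ⟨v, ?_, ?_⟩
    · rcases Finset.mem_union.mp hv with h | h
      · exact Finset.mem_union_left _ ((hmax.2 Xh Yh hexact).1 h)
      · exact Finset.mem_union_right _ ((hmax.2 Xh Yh hexact).2 h)
    · have := hF v hv
      rwa [hXeq, hYeq] at this
end

section
/- Every v-minimal match is a simple match: if (X_v,Y_v) is a v-minimal ε-approximate match in (𝒳,𝒴) for some neuron v ∈ 𝒳 ∪ 𝒴, then (X_v,Y_v) is a simple match. -/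
variable {V : Type*} [DecidableEq V]

/-- `(Xv, Yv)` is a `v`-minimal (ε-approximate) match in `(𝒳, 𝒴)`. -/
def IsMinimalMatchFor (d : ℕ) (ε : ℝ) (z : V → EuclideanSpace ℝ (Fin d))
    (𝒳 𝒴 : Finset V) (v : V) (Xv Yv : Finset V) : Prop :=
  IsApproxMatch d ε z 𝒳 𝒴 Xv Yv ∧ v ∈ Xv ∪ Yv ∧
    ∀ X Y : Finset V, IsApproxMatch d ε z 𝒳 𝒴 X Y → X ⊆ Xv → Y ⊆ Yv → v ∈ X ∪ Y →
      X = Xv ∧ Y = Yv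

/-- Every `v`-minimal ε-approximate match is a simple match. -/
theorem vMinimal_isSimple (d : ℕ) (ε : ℝ) (hε0 : 0 ≤ ε) (hε1 : ε < 1)
    (z : V → EuclideanSpace ℝ (Fin d)) (𝒳 𝒴 : Finset V) (hdisj : Disjoint 𝒳 𝒴)
    (v : V) (hv : v ∈ 𝒳 ∪ 𝒴) (Xv Yv : Finset V)
    (h : IsMinimalMatchFor d ε z 𝒳 𝒴 v Xv Yv) :
    IsSimpleMatch d ε z 𝒳 𝒴 Xv Yv := by
  obtain ⟨hm, hvmem, hmin⟩ := h
  refine ⟨hm, ⟨v, hvmem⟩, ?_⟩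
  rintro ⟨𝒮, h𝒮, hX, hY⟩
  have : ∃ p ∈ 𝒮, v ∈ p.1 ∪ p.2 := by
    rcases Finset.mem_union.mp hvmem with hvX | hvY
    · obtain ⟨p, hp, hvp⟩ := Finset.mem_biUnion.mp (hX ▸ hvX)
      exact ⟨p, hp, Finset.mem_union_left _ hvp⟩
    · obtain ⟨p, hp, hvp⟩ := Finset.mem_biUnion.mp (hY ▸ hvY)
      exact ⟨p, hp, Finset.mem_union_right _ hvp⟩
  obtain ⟨p, hp, hvp⟩ := this
  obtain ⟨hpm, hpss⟩ := h𝒮 p hp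
  have h1 : p.1 ⊆ Xv := hX ▸ Finset.subset_biUnion_of_mem Prod.fst hp
  have h2 : p.2 ⊆ Yv := hY ▸ Finset.subset_biUnion_of_mem Prod.snd hp
  obtain ⟨e1, e2⟩ := hmin p.1 p.2 hpm h1 h2 hvp
  rw [e1, e2] at hpss
  exact (lt_irrefl _ hpss)
end

section
/- Every simple match is a v-minimal match: let (X*,Y*) be the maximum ε-approximate match in (𝒳,𝒴). If (X̂,Ŷ) is a simple match in (𝒳,𝒴), then there exists a neuron v ∈ X* ∪ Y* such that (X̂,Ŷ) is a v-minimal match. -/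
variable {V : Type*} [DecidableEq V]

/-- Every simple ε-approximate match is a `v`-minimal match for some `v` in the maximum match. -/
theorem simple_isVMinimal (d : ℕ) (ε : ℝ) (hε0 : 0 ≤ ε) (hε1 : ε < 1)
    (z : V → EuclideanSpace ℝ (Fin d)) (𝒳 𝒴 : Finset V) (hdisj : Disjoint 𝒳 𝒴)
    (Xs Ys : Finset V)
    (hmax : IsApproxMatch d ε z 𝒳 𝒴 Xs Ys ∧
      ∀ X Y : Finset V, IsApproxMatch d ε z 𝒳 𝒴 X Y → X ⊆ Xs ∧ Y ⊆ Ys)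
    (Xh Yh : Finset V) (h : IsSimpleMatch d ε z 𝒳 𝒴 Xh Yh) :
    ∃ v ∈ Xs ∪ Ys, IsMinimalMatchFor d ε z 𝒳 𝒴 v Xh Yh := by
  obtain ⟨hm, hne, hnot⟩ := h
  obtain ⟨hXsub, hYsub⟩ := hmax.2 Xh Yh hm
  have hX𝒳 : Xh ⊆ 𝒳 := hm.1
  have hY𝒴 : Yh ⊆ 𝒴 := hm.2.1
  -- key equality lemma: if X∪Y = Xh∪Yh with X⊆Xh, Y⊆Yh then X=Xh, Y=Yh
  have hkey : ∀ X Y : Finset V, X ⊆ Xh → Y ⊆ Yh → X ∪ Y = Xh ∪ Yh →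
      X = Xh ∧ Y = Yh := by
    intro X Y hX hY hU
    constructor
    · apply Finset.Subset.antisymm hX
      intro x hx
      have hx' : x ∈ X ∪ Y := hU ▸ Finset.mem_union_left _ hx
      rcases Finset.mem_union.mp hx' with h1 | h1
      · exact h1
      · exact absurd (hY𝒴 (hY h1)) (Finset.disjoint_left.mp hdisj (hX𝒳 hx))
    · apply Finset.Subset.antisymm hY
      intro y hy
      have hy' : y ∈ X ∪ Y := hU ▸ Finset.mem_union_right _ hy
      rcases Finset.mem_union.mp hy' with h1 | h1
      · exact absurd (hY𝒴 hy) (Finset.disjoint_left.mp hdisj (hX𝒳 (hX h1)))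
      · exact h1
  by_contra hcon
  push_neg at hcon
  have key : ∀ v ∈ Xh ∪ Yh, ∃ X Y : Finset V,
      IsApproxMatch d ε z 𝒳 𝒴 X Y ∧ X ⊆ Xh ∧ Y ⊆ Yh ∧ v ∈ X ∪ Y ∧
        X ∪ Y ⊂ Xh ∪ Yh := by
    intro v hv
    have hvS : v ∈ Xs ∪ Ys := by
      rcases Finset.mem_union.mp hv with h1 | h1
      · exact Finset.mem_union_left _ (hXsub h1)
      · exact Finset.mem_union_right _ (hYsub h1)
    have hnm := hcon v hvS
    unfold IsMinimalMatchFor at hnm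
    push_neg at hnm
    obtain ⟨X, Y, hXY, hXs, hYs, hvXY, hneq⟩ := hnm hm hv
    refine ⟨X, Y, hXY, hXs, hYs, hvXY, ?_⟩
    refine (Finset.ssubset_iff_subset_ne).mpr ⟨Finset.union_subset_union hXs hYs, ?_⟩
    intro hEq
    obtain ⟨h1, h2⟩ := hkey X Y hXs hYs hEq
    exact hneq h1 h2
  choose f g hfm hfX hgY hvin hss using key
  apply hnot
  refine ⟨(Xh ∪ Yh).attach.image (fun v => (f v.1 v.2, g v.1 v.2)), ?_, ?_, ?_⟩
  · intro p hp
    simp only [Finset.mem_image, Finset.mem_attach, true_and] at hp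
    obtain ⟨v, hv⟩ := hp
    subst hv
    exact ⟨hfm v.1 v.2, hss v.1 v.2⟩
  · apply Finset.Subset.antisymm
    · intro x hx
      simp only [Finset.mem_biUnion, Finset.mem_image, Finset.mem_attach, true_and] at hx
      obtain ⟨p, ⟨v, hv⟩, hxp⟩ := hx
      subst hv
      exact hfX v.1 v.2 hxp
    · intro x hx
      have hx' : x ∈ Xh ∪ Yh := Finset.mem_union_left _ hx
      have hxX : x ∈ f x hx' := by
        rcases Finset.mem_union.mp (hvin x hx') with h1 | h1
        · exact h1
        · exact absurd (hY𝒴 (hgY x hx' h1)) (Finset.disjoint_left.mp hdisj (hX𝒳 hx))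
      apply Finset.mem_biUnion.mpr
      exact ⟨(f x hx', g x hx'), Finset.mem_image.mpr ⟨⟨x, hx'⟩, Finset.mem_attach _ _, rfl⟩, hxX⟩
  · apply Finset.Subset.antisymm
    · intro y hy
      simp only [Finset.mem_biUnion, Finset.mem_image, Finset.mem_attach, true_and] at hy
      obtain ⟨p, ⟨v, hv⟩, hyp⟩ := hy
      subst hv
      exact hgY v.1 v.2 hyp
    · intro y hy
      have hy' : y ∈ Xh ∪ Yh := Finset.mem_union_right _ hy
      have hyY : y ∈ g y hy' := by
        rcases Finset.mem_union.mp (hvin y hy') with h1 | h1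
        · exact absurd (hY𝒴 hy) (Finset.disjoint_left.mp hdisj (hX𝒳 (hfX y hy' h1)))
        · exact h1
      apply Finset.mem_biUnion.mpr
      exact ⟨(f y hy', g y hy'), Finset.mem_image.mpr ⟨⟨y, hy'⟩, Finset.mem_attach _ _, rfl⟩, hyY⟩
end

section
/- Intersection-closedness under strong linear independence and stability: suppose θ ∈ (0, π/2] and the families (z_x)_{x ∈ 𝒳} and (z_y)_{y ∈ 𝒴} both satisfy θ-strong linear independence and (ε, 2/sin θ + 1)-stability. If (X₁,Y₁) and (X₂,Y₂) are ε-approximate matches in (𝒳,𝒴), then (X₁ ∩ X₂, Y₁ ∩ Y₂) is also an ε-approximate match. -/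
variable {V : Type*} [DecidableEq V]

open InnerProductGeometry in
-- angle lemma
lemma sin_mul_norm_le_norm_sub {E : Type*} [NormedAddCommGroup E] [InnerProductSpace ℝ E]
    (θ : ℝ) (hθ0 : 0 ≤ θ) (hθπ : θ ≤ Real.pi) (u w : E) (h : θ ≤ angle u w) :
    Real.sin θ * ‖u‖ ≤ ‖u - w‖ := by
  have hcos : Real.cos (angle u w) ≤ Real.cos θ :=
    Real.cos_le_cos_of_nonneg_of_le_pi hθ0 (angle_le_pi u w) h
  have hinner : Real.cos (angle u w) * (‖u‖ * ‖w‖) = inner ℝ u w :=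
    cos_angle_mul_norm_mul_norm u w
  have hnormsq : ‖u - w‖ ^ 2 = ‖u‖ ^ 2 - 2 * inner ℝ u w + ‖w‖ ^ 2 := norm_sub_sq_real u w
  have hsin : 0 ≤ Real.sin θ := Real.sin_nonneg_of_nonneg_of_le_pi hθ0 hθπ
  have hsc : Real.sin θ ^ 2 + Real.cos θ ^ 2 = 1 := Real.sin_sq_add_cos_sq θ
  have hun : (0:ℝ) ≤ ‖u‖ := norm_nonneg _
  have hwn : (0:ℝ) ≤ ‖w‖ := norm_nonneg _
  have huwn : (0:ℝ) ≤ ‖u - w‖ := norm_nonneg _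
  nlinarith [sq_nonneg (‖w‖ - Real.cos θ * ‖u‖), mul_nonneg hun hwn,
    mul_le_mul_of_nonneg_right hcos (mul_nonneg hun hwn),
    sq_nonneg (‖u - w‖ - Real.sin θ * ‖u‖), sq_nonneg (‖u - w‖ + Real.sin θ * ‖u‖)]

/-- The family `(z x)_{x ∈ 𝒳}` satisfies θ-strong linear independence: no vector is zero and
the angle between the spans of any two nonempty disjoint subfamilies is at least θ. -/
def StrongLinIndepOn (d : ℕ) (θ : ℝ) (z : V → EuclideanSpace ℝ (Fin d)) (𝒳 : Finset V) : Prop :=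
  (∀ x ∈ 𝒳, z x ≠ 0) ∧
    ∀ X₁ X₂ : Finset V, X₁ ⊆ 𝒳 → X₂ ⊆ 𝒳 → X₁.Nonempty → X₂.Nonempty → Disjoint X₁ X₂ →
      ∀ u ∈ Submodule.span ℝ (z '' (X₁ : Set V)), u ≠ 0 →
        ∀ w ∈ Submodule.span ℝ (z '' (X₂ : Set V)), w ≠ 0 →
          θ ≤ InnerProductGeometry.angle u w

/-- The families `(z x)_{x ∈ 𝒳}` and `(z y)_{y ∈ 𝒴}` satisfy (ε, lam)-stability. -/
def SatisfiesStability (d : ℕ) (ε lam : ℝ) (z : V → EuclideanSpace ℝ (Fin d))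
    (𝒳 𝒴 : Finset V) : Prop :=
  (∀ x ∈ 𝒳, ∀ Y : Finset V, Y ⊆ 𝒴 →
      Metric.infDist (z x) (Submodule.span ℝ (z '' (Y : Set V)) : Set (EuclideanSpace ℝ (Fin d)))
        ∉ Set.Ioc (ε * ‖z x‖) (lam * (ε * ‖z x‖))) ∧
  (∀ y ∈ 𝒴, ∀ X : Finset V, X ⊆ 𝒳 →
      Metric.infDist (z y) (Submodule.span ℝ (z '' (X : Set V)) : Set (EuclideanSpace ℝ (Fin d)))
        ∉ Set.Ioc (ε * ‖z y‖) (lam * (ε * ‖z y‖)))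

open InnerProductGeometry Metric in
lemma key_inter {V : Type*} [DecidableEq V] (d : ℕ) (ε θ : ℝ) (hε0 : 0 ≤ ε)
    (hθ0 : 0 < θ) (hθ1 : θ ≤ Real.pi / 2)
    (z : V → EuclideanSpace ℝ (Fin d)) (𝒴 : Finset V)
    (hsli : StrongLinIndepOn d θ z 𝒴)
    (v : EuclideanSpace ℝ (Fin d))
    (hstab : ∀ Y : Finset V, Y ⊆ 𝒴 →
      Metric.infDist v (Submodule.span ℝ (z '' (Y : Set V)) : Set (EuclideanSpace ℝ (Fin d)))
        ∉ Set.Ioc (ε * ‖v‖) ((2 / Real.sin θ + 1) * (ε * ‖v‖)))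
    (Y₁ Y₂ : Finset V) (hY₁ : Y₁ ⊆ 𝒴) (hY₂ : Y₂ ⊆ 𝒴)
    (h1 : Metric.infDist v
      (Submodule.span ℝ (z '' (Y₁ : Set V)) : Set (EuclideanSpace ℝ (Fin d))) ≤ ε * ‖v‖)
    (h2 : Metric.infDist v
      (Submodule.span ℝ (z '' (Y₂ : Set V)) : Set (EuclideanSpace ℝ (Fin d))) ≤ ε * ‖v‖) :
    Metric.infDist v
      (Submodule.span ℝ (z '' ((Y₁ ∩ Y₂ : Finset V) : Set V)) : Set (EuclideanSpace ℝ (Fin d)))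
      ≤ ε * ‖v‖ := by
  have hπ : θ ≤ Real.pi := hθ1.trans (by linarith [Real.pi_pos])
  have hsinpos : 0 < Real.sin θ := Real.sin_pos_of_pos_of_lt_pi hθ0
    (lt_of_le_of_lt hθ1 (by linarith [Real.pi_pos]))
  set N := ε * ‖v‖ with hN
  have hN0 : 0 ≤ N := mul_nonneg hε0 (norm_nonneg _)
  -- minimizers
  obtain ⟨u₁, hu₁mem, hu₁⟩ := (Submodule.closed_of_finiteDimensional
    (Submodule.span ℝ (z '' (Y₁ : Set V)))).exists_infDist_eq_dist
    ⟨0, Submodule.zero_mem _⟩ v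
  obtain ⟨u₂, hu₂mem, hu₂⟩ := (Submodule.closed_of_finiteDimensional
    (Submodule.span ℝ (z '' (Y₂ : Set V)))).exists_infDist_eq_dist
    ⟨0, Submodule.zero_mem _⟩ v
  have hu₁le : ‖v - u₁‖ ≤ N := by rw [← dist_eq_norm, ← hu₁]; exact h1
  have hu₂le : ‖v - u₂‖ ≤ N := by rw [← dist_eq_norm, ← hu₂]; exact h2
  -- decompose u₁ = p + q
  have hsplit : Submodule.span ℝ (z '' (Y₁ : Set V)) =
      Submodule.span ℝ (z '' ((Y₁ ∩ Y₂ : Finset V) : Set V)) ⊔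
      Submodule.span ℝ (z '' ((Y₁ \ Y₂ : Finset V) : Set V)) := by
    have hfun : (Y₁ ∩ Y₂) ∪ (Y₁ \ Y₂) = Y₁ := by
      ext a; simp only [Finset.mem_union, Finset.mem_inter, Finset.mem_sdiff]; tauto
    rw [← Submodule.span_union, ← Set.image_union, ← Finset.coe_union, hfun]
  rw [hsplit] at hu₁mem
  obtain ⟨p, hp, q, hq, hpq⟩ := Submodule.mem_sup.mp hu₁mem
  -- bound ‖q‖ ≤ 2N / sin θ
  have hdiff : ‖u₁ - u₂‖ ≤ 2 * N := by
    calc ‖u₁ - u₂‖ = ‖(u₁ - v) + (v - u₂)‖ := by congr 1; abel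
      _ ≤ ‖u₁ - v‖ + ‖v - u₂‖ := norm_add_le _ _
      _ ≤ N + N := by rw [norm_sub_rev]; exact add_le_add hu₁le hu₂le
      _ = 2 * N := by ring
  have hw'mem : u₂ - p ∈ Submodule.span ℝ (z '' (Y₂ : Set V)) := by
    refine Submodule.sub_mem _ hu₂mem ?_
    refine Submodule.span_mono (Set.image_mono ?_) hp
    exact_mod_cast Finset.inter_subset_right
  have hqsub : q - (u₂ - p) = u₁ - u₂ := by rw [← hpq]; abel
  have hqle : ‖q‖ ≤ 2 * N / Real.sin θ := by
    by_cases hq0 : q = 0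
    · simp [hq0]; positivity
    by_cases hw0 : u₂ - p = 0
    · rw [hw0, sub_zero] at hqsub
      rw [hqsub]
      calc ‖u₁ - u₂‖ ≤ 2 * N := hdiff
        _ ≤ 2 * N / Real.sin θ := by
          rw [le_div_iff₀ hsinpos]
          nlinarith [Real.sin_le_one θ, hN0]
    · -- both nonzero: use SLI
      have hY₁ne : (Y₁ \ Y₂ : Finset V).Nonempty := by
        by_contra h
        rw [Finset.not_nonempty_iff_eq_empty] at h
        rw [h] at hq
        simp only [Finset.coe_empty, Set.image_empty, Submodule.span_empty,
          Submodule.mem_bot] at hq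
        exact hq0 hq
      have hY₂ne : Y₂.Nonempty := by
        by_contra h
        rw [Finset.not_nonempty_iff_eq_empty] at h
        rw [h] at hw'mem
        simp only [Finset.coe_empty, Set.image_empty, Submodule.span_empty,
          Submodule.mem_bot] at hw'mem
        exact hw0 hw'mem
      have hang : θ ≤ angle q (u₂ - p) :=
        hsli.2 (Y₁ \ Y₂) Y₂ ((Finset.sdiff_subset).trans hY₁) hY₂ hY₁ne hY₂ne
          Finset.sdiff_disjoint q hq hq0 (u₂ - p) hw'mem hw0
      have := sin_mul_norm_le_norm_sub θ hθ0.le hπ q (u₂ - p) hang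
      rw [hqsub] at this
      rw [le_div_iff₀ hsinpos]
      calc ‖q‖ * Real.sin θ = Real.sin θ * ‖q‖ := by ring
        _ ≤ ‖u₁ - u₂‖ := this
        _ ≤ 2 * N := hdiff
  -- final bound
  have hfinal : Metric.infDist v
      (Submodule.span ℝ (z '' ((Y₁ ∩ Y₂ : Finset V) : Set V)) : Set (EuclideanSpace ℝ (Fin d)))
      ≤ (2 / Real.sin θ + 1) * N := by
    calc Metric.infDist v _ ≤ dist v p := Metric.infDist_le_dist_of_mem hp
      _ = ‖(v - u₁) + q‖ := by rw [dist_eq_norm, ← hpq]; congr 1; abel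
      _ ≤ ‖v - u₁‖ + ‖q‖ := norm_add_le _ _
      _ ≤ N + 2 * N / Real.sin θ := add_le_add hu₁le hqle
      _ = (2 / Real.sin θ + 1) * N := by field_simp; ring
  have hnot := hstab (Y₁ ∩ Y₂) ((Finset.inter_subset_left).trans hY₁)
  by_contra hc
  push_neg at hc
  exact hnot ⟨hc, hfinal⟩

/-- Under θ-strong linear independence and (ε, 2/sin θ + 1)-stability, ε-approximate matches
are closed under componentwise intersection. -/
theorem intersection_close_of_sli_stability (d : ℕ) (ε : ℝ) (hε0 : 0 ≤ ε) (hε1 : ε < 1)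
    (θ : ℝ) (hθ0 : 0 < θ) (hθ1 : θ ≤ Real.pi / 2)
    (z : V → EuclideanSpace ℝ (Fin d)) (𝒳 𝒴 : Finset V) (hdisj : Disjoint 𝒳 𝒴)
    (hsliX : StrongLinIndepOn d θ z 𝒳) (hsliY : StrongLinIndepOn d θ z 𝒴)
    (hstab : SatisfiesStability d ε (2 / Real.sin θ + 1) z 𝒳 𝒴)
    (X₁ Y₁ X₂ Y₂ : Finset V)
    (h₁ : IsApproxMatch d ε z 𝒳 𝒴 X₁ Y₁) (h₂ : IsApproxMatch d ε z 𝒳 𝒴 X₂ Y₂) :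
    IsApproxMatch d ε z 𝒳 𝒴 (X₁ ∩ X₂) (Y₁ ∩ Y₂) := by
  obtain ⟨hX₁, hY₁, hx₁, hy₁⟩ := h₁
  obtain ⟨hX₂, hY₂, hx₂, hy₂⟩ := h₂
  refine ⟨(Finset.inter_subset_left).trans hX₁, (Finset.inter_subset_left).trans hY₁, ?_, ?_⟩
  · intro x hx
    obtain ⟨hx1, hx2⟩ := Finset.mem_inter.mp hx
    exact key_inter d ε θ hε0 hθ0 hθ1 z 𝒴 hsliY (z x)
      (hstab.1 x (hX₁ hx1)) Y₁ Y₂ hY₁ hY₂ (hx₁ x hx1) (hx₂ x hx2)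
  · intro y hy
    obtain ⟨hy1, hy2⟩ := Finset.mem_inter.mp hy
    exact key_inter d ε θ hε0 hθ0 hθ1 z 𝒳 hsliX (z y)
      (hstab.2 y (hY₁ hy1)) X₁ X₂ hX₁ hX₂ (hy₁ y hy1) (hy₂ y hy2)
end

section
/- Uniqueness of v-minimal matches under strong linear independence and stability: suppose θ ∈ (0, π/2] and the families (z_x)_{x ∈ 𝒳} and (z_y)_{y ∈ 𝒴} both satisfy θ-strong linear independence and (ε, 2/sin θ + 1)-stability. Then for every neuron v ∈ 𝒳 ∪ 𝒴 there is at most one v-minimal match. -/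
variable {V : Type*} [DecidableEq V]

open InnerProductGeometry Real Metric Submodule

lemma norm_mul_sin_angle_le {E : Type*} [NormedAddCommGroup E] [InnerProductSpace ℝ E]
    (u w : E) : ‖u‖ * Real.sin (angle u w) ≤ ‖u - w‖ := by
  set α := angle u w with hα
  have hs : 0 ≤ Real.sin α := Real.sin_nonneg_of_nonneg_of_le_pi (angle_nonneg u w) (angle_le_pi u w)
  have hinner : (inner ℝ u w : ℝ) = Real.cos α * (‖u‖ * ‖w‖) := by
    rcases eq_or_ne (‖u‖ * ‖w‖) 0 with h0 | h0
    · rcases mul_eq_zero.mp h0 with h | h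
      · simp [norm_eq_zero.mp h, h0]
      · simp [norm_eq_zero.mp h, h0]
    · rw [hα, cos_angle]; field_simp; rw [mul_assoc, mul_div_cancel_right₀ _ h0]
  have hsq : (‖u‖ * Real.sin α)^2 ≤ ‖u - w‖^2 := by
    have h1 := norm_sub_sq_real u w
    have h2 := Real.sin_sq_add_cos_sq α
    nlinarith [sq_nonneg (‖u‖ * Real.cos α - ‖w‖)]
  have h := Real.sqrt_le_sqrt hsq
  rwa [Real.sqrt_sq (mul_nonneg (norm_nonneg _) hs), Real.sqrt_sq (norm_nonneg _)] at h

lemma sin_le_sin_of_between {θ α : ℝ} (hθ0 : 0 < θ) (hθ1 : θ ≤ Real.pi / 2)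
    (h1 : θ ≤ α) (h2 : α ≤ Real.pi - θ) : Real.sin θ ≤ Real.sin α := by
  have hpi := Real.pi_pos
  have hmono := Real.strictMonoOn_sin.monotoneOn
  rcases le_total α (Real.pi / 2) with h | h
  · exact hmono ⟨by linarith, by linarith⟩ ⟨by linarith, h⟩ h1
  · rw [← Real.sin_pi_sub α]
    exact hmono ⟨by linarith, by linarith⟩ ⟨by linarith, by linarith⟩ (by linarith)

open Metric Submodule InnerProductGeometry in
lemma key_step {d : ℕ} {ε θ : ℝ} (hε0 : 0 ≤ ε) (hθ0 : 0 < θ) (hθ1 : θ ≤ Real.pi / 2)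
    (z : V → EuclideanSpace ℝ (Fin d)) (𝒴 Y₁ Y₂ : Finset V)
    (hY₁ : Y₁ ⊆ 𝒴) (hY₂ : Y₂ ⊆ 𝒴) (hsli : StrongLinIndepOn d θ z 𝒴)
    (p : EuclideanSpace ℝ (Fin d))
    (hst : ∀ Y : Finset V, Y ⊆ 𝒴 →
      infDist p (span ℝ (z '' (Y : Set V)) : Set (EuclideanSpace ℝ (Fin d)))
        ∉ Set.Ioc (ε * ‖p‖) ((2 / Real.sin θ + 1) * (ε * ‖p‖)))
    (h1 : infDist p (span ℝ (z '' (Y₁ : Set V)) : Set (EuclideanSpace ℝ (Fin d))) ≤ ε * ‖p‖)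
    (h2 : infDist p (span ℝ (z '' (Y₂ : Set V)) : Set (EuclideanSpace ℝ (Fin d))) ≤ ε * ‖p‖) :
    infDist p (span ℝ (z '' ((Y₁ ∩ Y₂ : Finset V) : Set V)) : Set (EuclideanSpace ℝ (Fin d)))
      ≤ ε * ‖p‖ := by
  have hpi := Real.pi_pos
  have hsθ : 0 < Real.sin θ := Real.sin_pos_of_pos_of_lt_pi hθ0 (by linarith)
  have hεp : 0 ≤ ε * ‖p‖ := mul_nonneg hε0 (norm_nonneg p)
  -- closest points
  obtain ⟨u₁, hu₁mem, hu₁⟩ := (Submodule.closed_of_finiteDimensional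
    (span ℝ (z '' (Y₁ : Set V)))).exists_infDist_eq_dist ⟨0, Submodule.zero_mem _⟩ p
  obtain ⟨u₂, hu₂mem, hu₂⟩ := (Submodule.closed_of_finiteDimensional
    (span ℝ (z '' (Y₂ : Set V)))).exists_infDist_eq_dist ⟨0, Submodule.zero_mem _⟩ p
  rw [hu₁] at h1
  rw [hu₂] at h2
  -- decompose u₁ = b₁ + a₁ with b₁ ∈ span(Y₁ \ Y₂), a₁ ∈ span(Y₁ ∩ Y₂)
  have hcover : (Y₁ : Set V) = ((Y₁ \ Y₂ : Finset V) : Set V) ∪ ((Y₁ ∩ Y₂ : Finset V) : Set V) := by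
    rw [← Finset.coe_union, Finset.sdiff_union_inter]
  have hu₁mem' : u₁ ∈ span ℝ (z '' ((Y₁ \ Y₂ : Finset V) : Set V)) ⊔
      span ℝ (z '' ((Y₁ ∩ Y₂ : Finset V) : Set V)) := by
    rw [← Submodule.span_union, ← Set.image_union, ← hcover]; exact hu₁mem
  obtain ⟨b₁, hb₁, a₁, ha₁, hsum⟩ := Submodule.mem_sup.mp hu₁mem'
  set c := u₂ - a₁ with hc
  have ha₁Y₂ : a₁ ∈ span ℝ (z '' (Y₂ : Set V)) :=
    Submodule.span_mono (Set.image_mono (f := z) (by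
      rw [Finset.coe_inter]; exact Set.inter_subset_right)) ha₁
  have hcmem : c ∈ span ℝ (z '' (Y₂ : Set V)) := sub_mem hu₂mem ha₁Y₂
  have hbc : b₁ - c = u₁ - u₂ := by rw [hc, ← hsum]; abel
  have hdiff : ‖u₁ - u₂‖ ≤ 2 * (ε * ‖p‖) := by
    have := dist_triangle u₁ p u₂
    rw [dist_comm u₁ p] at this
    rw [← dist_eq_norm]
    linarith
  have hb1bound : ‖b₁‖ ≤ 2 / Real.sin θ * (ε * ‖p‖) := by
    have h2div : 2 ≤ 2 / Real.sin θ := by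
      rw [le_div_iff₀ hsθ]; nlinarith [Real.sin_le_one θ]
    by_cases hb0 : b₁ = 0
    · rw [hb0, norm_zero]; positivity
    by_cases hc0 : c = 0
    · rw [hc0, sub_zero] at hbc
      rw [hbc]
      calc ‖u₁ - u₂‖ ≤ 2 * (ε * ‖p‖) := hdiff
        _ ≤ 2 / Real.sin θ * (ε * ‖p‖) := by nlinarith
    -- both nonzero: use strong linear independence
    have hne1 : (Y₁ \ Y₂).Nonempty := by
      rcases (Y₁ \ Y₂).eq_empty_or_nonempty with h | h
      · exfalso; apply hb0
        rw [h] at hb₁; simpa [Submodule.mem_bot] using hb₁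
      · exact h
    have hne2 : Y₂.Nonempty := by
      rcases Y₂.eq_empty_or_nonempty with h | h
      · exfalso; apply hc0
        rw [h] at hcmem; simpa [Submodule.mem_bot] using hcmem
      · exact h
    have hsub1 : Y₁ \ Y₂ ⊆ 𝒴 := (Finset.sdiff_subset).trans hY₁
    have hang1 : θ ≤ angle b₁ c :=
      hsli.2 (Y₁ \ Y₂) Y₂ hsub1 hY₂ hne1 hne2 Finset.sdiff_disjoint b₁ hb₁ hb0 c hcmem hc0
    have hang2 : θ ≤ angle b₁ (-c) :=
      hsli.2 (Y₁ \ Y₂) Y₂ hsub1 hY₂ hne1 hne2 Finset.sdiff_disjoint b₁ hb₁ hb0 (-c)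
        (neg_mem hcmem) (neg_ne_zero.mpr hc0)
    rw [angle_neg_right] at hang2
    have hsin : Real.sin θ ≤ Real.sin (angle b₁ c) :=
      sin_le_sin_of_between hθ0 hθ1 hang1 (by linarith)
    have hkey := norm_mul_sin_angle_le b₁ c
    rw [hbc] at hkey
    have h' : ‖b₁‖ * Real.sin θ ≤ 2 * (ε * ‖p‖) := by
      calc ‖b₁‖ * Real.sin θ ≤ ‖b₁‖ * Real.sin (angle b₁ c) :=
            mul_le_mul_of_nonneg_left hsin (norm_nonneg _)
        _ ≤ ‖u₁ - u₂‖ := hkey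
        _ ≤ 2 * (ε * ‖p‖) := hdiff
    calc ‖b₁‖ = ‖b₁‖ * Real.sin θ / Real.sin θ := by field_simp
      _ ≤ 2 * (ε * ‖p‖) / Real.sin θ := by gcongr
      _ = 2 / Real.sin θ * (ε * ‖p‖) := by ring
  -- distance bound to span of the intersection
  have hbound : infDist p (span ℝ (z '' ((Y₁ ∩ Y₂ : Finset V) : Set V))
      : Set (EuclideanSpace ℝ (Fin d))) ≤ (2 / Real.sin θ + 1) * (ε * ‖p‖) := by
    have hle : infDist p (span ℝ (z '' ((Y₁ ∩ Y₂ : Finset V) : Set V))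
        : Set (EuclideanSpace ℝ (Fin d))) ≤ dist p a₁ := infDist_le_dist_of_mem ha₁
    have : dist p a₁ ≤ ε * ‖p‖ + ‖b₁‖ := by
      have heq : p - a₁ = (p - u₁) + b₁ := by rw [← hsum]; abel
      rw [dist_eq_norm, heq]
      have := norm_add_le (p - u₁) b₁
      rw [← dist_eq_norm] at this
      linarith
    nlinarith
  by_contra hcon
  push_neg at hcon
  exact hst (Y₁ ∩ Y₂) ((Finset.inter_subset_left).trans hY₁) ⟨hcon, hbound⟩

/-- Under θ-strong linear independence and (ε, 2/sin θ + 1)-stability, every neuron has at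
most one `v`-minimal match. -/
theorem vMinimal_unique_of_sli_stability (d : ℕ) (ε : ℝ) (hε0 : 0 ≤ ε) (hε1 : ε < 1)
    (θ : ℝ) (hθ0 : 0 < θ) (hθ1 : θ ≤ Real.pi / 2)
    (z : V → EuclideanSpace ℝ (Fin d)) (𝒳 𝒴 : Finset V) (hdisj : Disjoint 𝒳 𝒴)
    (hsliX : StrongLinIndepOn d θ z 𝒳) (hsliY : StrongLinIndepOn d θ z 𝒴)
    (hstab : SatisfiesStability d ε (2 / Real.sin θ + 1) z 𝒳 𝒴) :
    ∀ v ∈ 𝒳 ∪ 𝒴, ∀ X₁ Y₁ X₂ Y₂ : Finset V,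
      IsMinimalMatchFor d ε z 𝒳 𝒴 v X₁ Y₁ → IsMinimalMatchFor d ε z 𝒳 𝒴 v X₂ Y₂ →
        X₁ = X₂ ∧ Y₁ = Y₂ := by
  intro v hv X₁ Y₁ X₂ Y₂ hmm₁ hmm₂
  obtain ⟨⟨hX₁, hY₁, hx₁, hy₁⟩, hv₁, hmin₁⟩ := hmm₁
  obtain ⟨⟨hX₂, hY₂, hx₂, hy₂⟩, hv₂, hmin₂⟩ := hmm₂
  -- the intersection is an approximate match
  have hmatch : IsApproxMatch d ε z 𝒳 𝒴 (X₁ ∩ X₂) (Y₁ ∩ Y₂) := by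
    refine ⟨(Finset.inter_subset_left).trans hX₁, (Finset.inter_subset_left).trans hY₁, ?_, ?_⟩
    · intro x hx
      have hxX₁ := Finset.mem_of_mem_inter_left hx
      have hxX₂ := Finset.mem_of_mem_inter_right hx
      exact key_step hε0 hθ0 hθ1 z 𝒴 Y₁ Y₂ hY₁ hY₂ hsliY (z x)
        (fun Y hY => hstab.1 x (hX₁ hxX₁) Y hY) (hx₁ x hxX₁) (hx₂ x hxX₂)
    · intro y hy
      have hyY₁ := Finset.mem_of_mem_inter_left hy
      have hyY₂ := Finset.mem_of_mem_inter_right hy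
      exact key_step hε0 hθ0 hθ1 z 𝒳 X₁ X₂ hX₁ hX₂ hsliX (z y)
        (fun X hX => hstab.2 y (hY₁ hyY₁) X hX) (hy₁ y hyY₁) (hy₂ y hyY₂)
  -- v belongs to the intersection match
  have hvmem : v ∈ (X₁ ∩ X₂) ∪ (Y₁ ∩ Y₂) := by
    rcases Finset.mem_union.mp hv₁ with h₁ | h₁
    · have hv𝒳 : v ∈ 𝒳 := hX₁ h₁
      rcases Finset.mem_union.mp hv₂ with h₂ | h₂
      · exact Finset.mem_union_left _ (Finset.mem_inter.mpr ⟨h₁, h₂⟩)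
      · exact absurd (hY₂ h₂) (Finset.disjoint_left.mp hdisj hv𝒳)
    · have hv𝒴 : v ∈ 𝒴 := hY₁ h₁
      rcases Finset.mem_union.mp hv₂ with h₂ | h₂
      · exact absurd (hX₂ h₂) (Finset.disjoint_right.mp hdisj hv𝒴)
      · exact Finset.mem_union_right _ (Finset.mem_inter.mpr ⟨h₁, h₂⟩)
  have e₁ := hmin₁ (X₁ ∩ X₂) (Y₁ ∩ Y₂) hmatch Finset.inter_subset_left
    Finset.inter_subset_left hvmem
  have e₂ := hmin₂ (X₁ ∩ X₂) (Y₁ ∩ Y₂) hmatch Finset.inter_subset_right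
    Finset.inter_subset_right hvmem
  exact ⟨e₁.1 ▸ e₂.1, e₁.2 ▸ e₂.2⟩
end

section
/- Matches are not closed under set difference: in ℝ², let 𝒳 = {x₁, x₂}, 𝒴 = {y₁, y₂} with activation vectors z_{x₁} = z_{y₁} = (1,0), z_{x₂} = (0,1), z_{y₂} = (1,1). Then ({x₁},{y₁}) and ({x₁,x₂},{y₁,y₂}) are exact matches, but ({x₂},{y₂}) is not an exact match. -/
variable {V : Type*} [DecidableEq V]

/-- Matches are not closed under set difference. -/
theorem not_closed_under_difference (x₁ x₂ y₁ y₂ : V)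
    (hnd : ([x₁, x₂, y₁, y₂] : List V).Nodup)
    (z : V → EuclideanSpace ℝ (Fin 2))
    (hx1 : z x₁ = (WithLp.equiv 2 (Fin 2 → ℝ)).symm ![1, 0])
    (hy1 : z y₁ = (WithLp.equiv 2 (Fin 2 → ℝ)).symm ![1, 0])
    (hx2 : z x₂ = (WithLp.equiv 2 (Fin 2 → ℝ)).symm ![0, 1])
    (hy2 : z y₂ = (WithLp.equiv 2 (Fin 2 → ℝ)).symm ![1, 1]) :
    IsExactMatch 2 z {x₁, x₂} {y₁, y₂} {x₁} {y₁} ∧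
    IsExactMatch 2 z {x₁, x₂} {y₁, y₂} {x₁, x₂} {y₁, y₂} ∧
    ¬ IsExactMatch 2 z {x₁, x₂} {y₁, y₂} {x₂} {y₂} := by
  have hxy : z x₁ = z y₁ := by rw [hx1, hy1]
  have hsub : z x₂ = z y₂ - z y₁ := by
    rw [hx2, hy2, hy1]
    ext i
    fin_cases i <;> simp [WithLp.equiv_symm_apply]
  refine ⟨⟨?_, ?_, ?_⟩, ⟨le_refl _, le_refl _, ?_⟩, ?_⟩
  · intro a ha; simp at ha; simp [ha]
  · intro a ha; simp at ha; simp [ha]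
  · simp [hxy]
  · -- span {z x₁, z x₂} = span {z y₁, z y₂}
    apply le_antisymm <;> rw [Submodule.span_le] <;> intro v hv <;>
      simp only [Finset.coe_insert, Finset.coe_singleton, Set.image_insert_eq,
        Set.image_singleton] at hv ⊢
    · rcases hv with h | h
      · subst h; rw [hxy]
        exact Submodule.subset_span (by simp)
      · simp at h; subst h; rw [hsub]
        exact sub_mem (Submodule.subset_span (by simp)) (Submodule.subset_span (by simp))
    · rcases hv with h | h
      · subst h; rw [← hxy]
        exact Submodule.subset_span (by simp)
      · simp at h; subst h
        have : z y₂ = z x₂ + z x₁ := by rw [hsub, hxy]; abel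
        rw [this]
        exact add_mem (Submodule.subset_span (by simp)) (Submodule.subset_span (by simp))
  · rintro ⟨-, -, h⟩
    have hmem : z y₂ ∈ Submodule.span ℝ (z '' ({x₂} : Finset V)) := by
      rw [h]; exact Submodule.subset_span (by simp)
    simp only [Finset.coe_singleton, Set.image_singleton,
      Submodule.mem_span_singleton] at hmem
    obtain ⟨c, hc⟩ := hmem
    have h0 : (c • z x₂) 0 = (z y₂) 0 := by rw [hc]
    rw [hx2, hy2] at h0
    simp [WithLp.equiv_symm_apply] at h0
end

section
/- A simple match can be a proper subset of another simple match: in ℝ², let 𝒳 = {x₁, x₂}, 𝒴 = {y₁, y₂} with activation vectors z_{x₁} = z_{y₁} = (1,0), z_{x₂} = (0,1), z_{y₂} = (1,1). Then ({x₁},{y₁}) and ({x₁,x₂},{y₁,y₂}) are both simple exact matches, while {x₁} ⊊ {x₁,x₂} and {y₁} ⊊ {y₁,y₂}. -/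
variable {V : Type*} [DecidableEq V]

noncomputable def ee (a b : ℝ) : EuclideanSpace ℝ (Fin 2) :=
  (WithLp.equiv 2 (Fin 2 → ℝ)).symm ![a, b]

lemma ee_ne_zero : ee 1 0 ≠ 0 := by
  intro h
  have := congrFun (congrArg (WithLp.equiv 2 (Fin 2 → ℝ)) h) 0
  simp [ee] at this

lemma not_mem_span1 : ee 0 1 ∉ Submodule.span ℝ ({ee 1 0} : Set (EuclideanSpace ℝ (Fin 2))) := by
  rw [Submodule.mem_span_singleton]
  rintro ⟨c, hc⟩
  have := congrFun (congrArg (WithLp.equiv 2 (Fin 2 → ℝ)) hc) 1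
  simp [ee] at this

lemma not_mem_span11 : ee 0 1 ∉ Submodule.span ℝ ({ee 1 1} : Set (EuclideanSpace ℝ (Fin 2))) := by
  rw [Submodule.mem_span_singleton]
  rintro ⟨c, hc⟩
  have h0 := congrFun (congrArg (WithLp.equiv 2 (Fin 2 → ℝ)) hc) 0
  have h1 := congrFun (congrArg (WithLp.equiv 2 (Fin 2 → ℝ)) hc) 1
  simp [ee] at h0 h1
  simp [h0] at h1

lemma not_mem_span01 : ee 1 0 ∉ Submodule.span ℝ ({ee 0 1} : Set (EuclideanSpace ℝ (Fin 2))) := by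
  rw [Submodule.mem_span_singleton]
  rintro ⟨c, hc⟩
  have := congrFun (congrArg (WithLp.equiv 2 (Fin 2 → ℝ)) hc) 0
  simp [ee] at this

lemma span_pair_top :
    Submodule.span ℝ ({ee 1 0, ee 0 1} : Set (EuclideanSpace ℝ (Fin 2))) = ⊤ := by
  rw [eq_top_iff]
  rintro x -
  have hx : x = x 0 • ee 1 0 + x 1 • ee 0 1 := by
    apply (WithLp.equiv 2 (Fin 2 → ℝ)).injective
    funext i
    fin_cases i <;> simp [ee]
  rw [hx]
  exact Submodule.add_mem _
    (Submodule.smul_mem _ _ (Submodule.subset_span (by simp)))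
    (Submodule.smul_mem _ _ (Submodule.subset_span (by simp)))

lemma span_pair_top' :
    Submodule.span ℝ ({ee 1 0, ee 1 1} : Set (EuclideanSpace ℝ (Fin 2))) = ⊤ := by
  rw [eq_top_iff, ← span_pair_top, Submodule.span_le]
  rintro v hv
  rcases hv with rfl | rfl
  · exact Submodule.subset_span (by simp)
  · have h : ee 0 1 = ee 1 1 - ee 1 0 := by
      apply (WithLp.equiv 2 (Fin 2 → ℝ)).injective
      funext i; fin_cases i <;> simp [ee]
    rw [h]
    exact Submodule.sub_mem _ (Submodule.subset_span (by simp))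
      (Submodule.subset_span (by simp))

lemma sub_pair_left {S : Finset V} {a b : V} (h : S ⊆ {a, b}) (hb : b ∉ S) : S ⊆ {a} := by
  intro v hv
  rcases Finset.mem_insert.mp (h hv) with rfl | hv2
  · exact Finset.mem_singleton_self _
  · rw [Finset.mem_singleton] at hv2; subst hv2; exact absurd hv hb

lemma sub_pair_right {S : Finset V} {a b : V} (h : S ⊆ {a, b}) (ha : a ∉ S) : S ⊆ {b} := by
  intro v hv
  rcases Finset.mem_insert.mp (h hv) with rfl | hv2
  · exact absurd hv ha
  · exact hv2

/-- A simple match can be a proper subset of another simple match. -/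
theorem simple_match_proper_subset (x₁ x₂ y₁ y₂ : V)
    (hnd : ([x₁, x₂, y₁, y₂] : List V).Nodup)
    (z : V → EuclideanSpace ℝ (Fin 2))
    (hx1 : z x₁ = (WithLp.equiv 2 (Fin 2 → ℝ)).symm ![1, 0])
    (hy1 : z y₁ = (WithLp.equiv 2 (Fin 2 → ℝ)).symm ![1, 0])
    (hx2 : z x₂ = (WithLp.equiv 2 (Fin 2 → ℝ)).symm ![0, 1])
    (hy2 : z y₂ = (WithLp.equiv 2 (Fin 2 → ℝ)).symm ![1, 1]) :
    IsSimpleExactMatch 2 z {x₁, x₂} {y₁, y₂} {x₁} {y₁} ∧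
    IsSimpleExactMatch 2 z {x₁, x₂} {y₁, y₂} {x₁, x₂} {y₁, y₂} ∧
    ({x₁} : Finset V) ⊂ {x₁, x₂} ∧ ({y₁} : Finset V) ⊂ {y₁, y₂} := by
  simp only [List.nodup_cons, List.mem_cons, List.mem_singleton, List.nodup_nil] at hnd
  obtain ⟨h12, h1y1, h1y2, h2y1, h2y2, hy12⟩ :
      x₁ ≠ x₂ ∧ x₁ ≠ y₁ ∧ x₁ ≠ y₂ ∧ x₂ ≠ y₁ ∧ x₂ ≠ y₂ ∧ y₁ ≠ y₂ := by
    tauto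
  replace hx1 : z x₁ = ee 1 0 := hx1
  replace hy1 : z y₁ = ee 1 0 := hy1
  replace hx2 : z x₂ = ee 0 1 := hx2
  replace hy2 : z y₂ = ee 1 1 := hy2
  have himg1 : z '' (({x₁} : Finset V) : Set V) = {ee 1 0} := by
    simp [hx1]
  have himg1' : z '' (({y₁} : Finset V) : Set V) = {ee 1 0} := by
    simp [hy1]
  have himgX : z '' (({x₁, x₂} : Finset V) : Set V) = {ee 1 0, ee 0 1} := by
    simp [Set.image_insert_eq, hx1, hx2]
  have himgY : z '' (({y₁, y₂} : Finset V) : Set V) = {ee 1 0, ee 1 1} := by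
    simp [Set.image_insert_eq, hy1, hy2]
  refine ⟨⟨⟨by simp, by simp, by rw [himg1, himg1']⟩, ⟨x₁, by simp⟩, ?_⟩,
    ⟨⟨le_refl _, le_refl _, by rw [himgX, himgY, span_pair_top, span_pair_top']⟩,
      ⟨x₁, by simp⟩, ?_⟩, ?_, ?_⟩
  · -- ({x₁}, {y₁}) is simple
    rintro ⟨𝒮, h𝒮, hfst, hsnd⟩
    have hx : x₁ ∈ 𝒮.biUnion Prod.fst := by rw [hfst]; simp
    obtain ⟨p, hp, hxp⟩ := Finset.mem_biUnion.mp hx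
    obtain ⟨⟨hp1, hp2, hspan⟩, hss⟩ := h𝒮 p hp
    have hp2' : p.2 ⊆ {y₁} := hsnd ▸ Finset.subset_biUnion_of_mem Prod.snd hp
    by_cases hy : y₁ ∈ p.2
    · refine hss.2 (Finset.union_subset ?_ ?_)
      · exact Finset.singleton_subset_iff.mpr (Finset.mem_union_left _ hxp)
      · exact Finset.singleton_subset_iff.mpr (Finset.mem_union_right _ hy)
    · have hpe : p.2 = ∅ := by
        rw [Finset.eq_empty_iff_forall_notMem]
        intro v hv
        have := hp2' hv
        rw [Finset.mem_singleton] at this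
        subst this; exact hy hv
      have hz : z x₁ ∈ Submodule.span ℝ (z '' (p.1 : Set V)) :=
        Submodule.subset_span ⟨x₁, hxp, rfl⟩
      rw [hspan, hpe] at hz
      simp at hz
      rw [hx1] at hz
      exact ee_ne_zero hz
  · -- ({x₁,x₂}, {y₁,y₂}) is simple
    rintro ⟨𝒮, h𝒮, hfst, hsnd⟩
    have hx : x₂ ∈ 𝒮.biUnion Prod.fst := by rw [hfst]; simp
    obtain ⟨p, hp, hxp⟩ := Finset.mem_biUnion.mp hx
    obtain ⟨⟨hp1, hp2, hspan⟩, hss⟩ := h𝒮 p hp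
    have hz2 : ee 0 1 ∈ Submodule.span ℝ (z '' (p.2 : Set V)) := by
      rw [← hspan, ← hx2]
      exact Submodule.subset_span ⟨x₂, hxp, rfl⟩
    have hyy2 : y₂ ∈ p.2 := by
      by_contra hy
      have hsub : p.2 ⊆ {y₁} := sub_pair_left hp2 hy
      have : Submodule.span ℝ (z '' (p.2 : Set V)) ≤
          Submodule.span ℝ ({ee 1 0} : Set (EuclideanSpace ℝ (Fin 2))) := by
        rw [← himg1']
        exact Submodule.span_mono (Set.image_mono (f := z) (Finset.coe_subset.mpr hsub))
      exact not_mem_span1 (this hz2)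
    have hyy1 : y₁ ∈ p.2 := by
      by_contra hy
      have hsub : p.2 ⊆ {y₂} := sub_pair_right hp2 hy
      have himg : z '' (({y₂} : Finset V) : Set V) = {ee 1 1} := by simp [hy2]
      have : Submodule.span ℝ (z '' (p.2 : Set V)) ≤
          Submodule.span ℝ ({ee 1 1} : Set (EuclideanSpace ℝ (Fin 2))) := by
        rw [← himg]
        exact Submodule.span_mono (Set.image_mono (f := z) (Finset.coe_subset.mpr hsub))
      exact not_mem_span11 (this hz2)
    have hp2eq : p.2 = {y₁, y₂} :=
      Finset.Subset.antisymm hp2 (Finset.insert_subset hyy1 (Finset.singleton_subset_iff.mpr hyy2))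
    have hspan_top : Submodule.span ℝ (z '' (p.1 : Set V)) = ⊤ := by
      rw [hspan, hp2eq, himgY, span_pair_top']
    have hxx1 : x₁ ∈ p.1 := by
      by_contra hx1m
      have hsub : p.1 ⊆ {x₂} := sub_pair_right hp1 hx1m
      have himg : z '' (({x₂} : Finset V) : Set V) = {ee 0 1} := by simp [hx2]
      have hle : Submodule.span ℝ (z '' (p.1 : Set V)) ≤
          Submodule.span ℝ ({ee 0 1} : Set (EuclideanSpace ℝ (Fin 2))) := by
        rw [← himg]
        exact Submodule.span_mono (Set.image_mono (f := z) (Finset.coe_subset.mpr hsub))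
      exact not_mem_span01 (hle (hspan_top ▸ Submodule.mem_top))
    have hp1eq : p.1 = {x₁, x₂} :=
      Finset.Subset.antisymm hp1 (Finset.insert_subset hxx1 (Finset.singleton_subset_iff.mpr hxp))
    exact hss.2 (by rw [hp1eq, hp2eq])
  · rw [Finset.pair_comm]
    exact Finset.ssubset_insert (by simp [h12.symm])
  · rw [Finset.pair_comm]
    exact Finset.ssubset_insert (by simp [hy12.symm])
end

section
/- Non-uniqueness of decomposition into simple matches: in ℝ², let 𝒳 = {x₁,x₂,x₃}, 𝒴 = {y₁,y₂,y₃} with activation vectors z_{x₁} = (0,1), z_{y₁} = (1,0), z_{x₂} = z_{y₂} = (1,1), z_{x₃} = z_{y₃} = (1,−1). Then ({x₁,x₂},{y₁,y₂}), ({x₃},{y₃}), ({x₁,x₃},{y₁,y₃}) and ({x₂},{y₂}) are all simple exact matches, and the full exact match (𝒳,𝒴) decomposes as the union of simple matches in two different ways: as ({x₁,x₂},{y₁,y₂}) ∪ ({x₃},{y₃}) and as ({x₁,x₃},{y₁,y₃}) ∪ ({x₂},{y₂}). -/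
variable {V : Type*} [DecidableEq V]

set_option linter.unusedSectionVars false

namespace DecompAux

open Submodule

abbrev E2 := EuclideanSpace ℝ (Fin 2)

lemma eval_symm (a b : ℝ) (i : Fin 2) :
    (WithLp.equiv 2 (Fin 2 → ℝ)).symm ![a, b] i = ![a, b] i := rfl

lemma ne_zero_of (v : E2) (i : Fin 2) (h : v i ≠ 0) : v ≠ 0 :=
  fun h0 => h (by rw [h0]; rfl)

lemma span_pair_top (u v : E2) (h : u 0 * v 1 - u 1 * v 0 ≠ 0) :
    Submodule.span ℝ ({u, v} : Set E2) = ⊤ := by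
  rw [eq_top_iff]
  intro x _
  have hx : x = ((x 0 * v 1 - x 1 * v 0)/(u 0 * v 1 - u 1 * v 0)) • u
      + ((u 0 * x 1 - u 1 * x 0)/(u 0 * v 1 - u 1 * v 0)) • v := by
    ext i
    fin_cases i <;> simp [PiLp.smul_apply, PiLp.add_apply] <;> rw [div_mul_eq_mul_div, div_mul_eq_mul_div, ← add_div, eq_div_iff h] <;> ring
  rw [hx]
  exact Submodule.add_mem _ (Submodule.smul_mem _ _ (Submodule.subset_span (by simp)))
    (Submodule.smul_mem _ _ (Submodule.subset_span (by simp)))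

lemma not_mem_span_single (w v : E2) (h : w 0 * v 1 - w 1 * v 0 ≠ 0) :
    v ∉ Submodule.span ℝ ({w} : Set E2) := by
  rw [Submodule.mem_span_singleton]
  rintro ⟨c, rfl⟩
  exact h (by simp [PiLp.smul_apply]; ring)

lemma mem_span_img (z : V → E2) {X : Finset V} {v : V} (hv : v ∈ X) :
    z v ∈ Submodule.span ℝ (z '' (X : Set V)) :=
  Submodule.subset_span ⟨v, hv, rfl⟩

lemma span_img_le_single (z : V → E2) {X : Finset V} {a : V} (h : X ⊆ {a}) :
    Submodule.span ℝ (z '' (X : Set V)) ≤ Submodule.span ℝ ({z a} : Set E2) := by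
  apply Submodule.span_mono
  rintro w ⟨v, hv, rfl⟩
  have : v = a := Finset.mem_singleton.1 (h hv)
  simp [this]

lemma pair_not_decomposable (z : V → E2) (𝒳 𝒴 : Finset V) (a b c d : V)
    (H1 : Submodule.span ℝ ({z a, z b} : Set E2) = ⊤)
    (H2 : z c ∉ Submodule.span ℝ ({z d} : Set E2))
    (H3 : z d ∉ Submodule.span ℝ ({z c} : Set E2))
    (H4 : z c ∉ Submodule.span ℝ ({z a} : Set E2))
    (H5 : z d ∉ Submodule.span ℝ ({z a} : Set E2))
    (H6 : z a ≠ 0) :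
    ¬ ∃ 𝒮 : Finset (Finset V × Finset V),
        (∀ p ∈ 𝒮, IsExactMatch 2 z 𝒳 𝒴 p.1 p.2 ∧
          p.1 ∪ p.2 ⊂ ({a, b} : Finset V) ∪ ({c, d} : Finset V)) ∧
        𝒮.biUnion Prod.fst = {a, b} ∧ 𝒮.biUnion Prod.snd = {c, d} := by
  rintro ⟨S, hS, hX, hY⟩
  have ha : a ∈ S.biUnion Prod.fst := by rw [hX]; simp
  obtain ⟨p, hpS, hap⟩ := Finset.mem_biUnion.1 ha
  have hp1 : p.1 ⊆ ({a, b} : Finset V) := hX ▸ Finset.subset_biUnion_of_mem Prod.fst hpS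
  have hp2 : p.2 ⊆ ({c, d} : Finset V) := hY ▸ Finset.subset_biUnion_of_mem Prod.snd hpS
  obtain ⟨⟨_, _, hspan⟩, hss⟩ := hS p hpS
  by_cases hb : b ∈ p.1
  · have htop1 : Submodule.span ℝ (z '' (p.1 : Set V)) = ⊤ := by
      rw [eq_top_iff, ← H1, Submodule.span_le]
      rintro w (rfl | rfl)
      · exact mem_span_img z hap
      · exact mem_span_img z hb
    have htop2 : Submodule.span ℝ (z '' (p.2 : Set V)) = ⊤ := hspan ▸ htop1
    have hc : c ∈ p.2 := by
      by_contra hc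
      have hsub : p.2 ⊆ {d} := by
        intro v hv
        rcases Finset.mem_insert.1 (hp2 hv) with rfl | h
        · exact absurd hv hc
        · exact h
      exact H2 (span_img_le_single z hsub (htop2 ▸ Submodule.mem_top))
    have hd : d ∈ p.2 := by
      by_contra hd
      have hsub : p.2 ⊆ {c} := by
        intro v hv
        rcases Finset.mem_insert.1 (hp2 hv) with rfl | h
        · exact Finset.mem_singleton_self _
        · exact absurd (Finset.mem_singleton.1 h ▸ hv) hd
      exact H3 (span_img_le_single z hsub (htop2 ▸ Submodule.mem_top))
    refine hss.not_subset ?_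
    intro v hv
    simp only [Finset.mem_union, Finset.mem_insert, Finset.mem_singleton] at hv ⊢
    rcases hv with (rfl | rfl) | (rfl | rfl)
    exacts [Or.inl hap, Or.inl hb, Or.inr hc, Or.inr hd]
  · have hp1a : p.1 ⊆ {a} := by
      intro v hv
      rcases Finset.mem_insert.1 (hp1 hv) with rfl | h
      · exact Finset.mem_singleton_self _
      · exact absurd (Finset.mem_singleton.1 h ▸ hv) hb
    have hle : Submodule.span ℝ (z '' (p.2 : Set V)) ≤ Submodule.span ℝ ({z a} : Set E2) :=
      hspan ▸ span_img_le_single z hp1a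
    by_cases hc : c ∈ p.2
    · exact H4 (hle (mem_span_img z hc))
    by_cases hd : d ∈ p.2
    · exact H5 (hle (mem_span_img z hd))
    · have hp2e : p.2 = ∅ := by
        rw [Finset.eq_empty_iff_forall_notMem]
        intro v hv
        rcases Finset.mem_insert.1 (hp2 hv) with rfl | h
        · exact hc hv
        · exact hd (Finset.mem_singleton.1 h ▸ hv)
      have hbot : Submodule.span ℝ (z '' (p.2 : Set V)) = ⊥ := by
        rw [hp2e]; simp
      have hza : z a ∈ Submodule.span ℝ (z '' (p.2 : Set V)) :=
        hspan ▸ mem_span_img z hap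
      rw [hbot, Submodule.mem_bot] at hza
      exact H6 hza

lemma single_not_decomposable (z : V → E2) (𝒳 𝒴 : Finset V) (a c : V)
    (H6 : z a ≠ 0) :
    ¬ ∃ 𝒮 : Finset (Finset V × Finset V),
        (∀ p ∈ 𝒮, IsExactMatch 2 z 𝒳 𝒴 p.1 p.2 ∧
          p.1 ∪ p.2 ⊂ ({a} : Finset V) ∪ ({c} : Finset V)) ∧
        𝒮.biUnion Prod.fst = {a} ∧ 𝒮.biUnion Prod.snd = {c} := by
  rintro ⟨S, hS, hX, hY⟩
  have ha : a ∈ S.biUnion Prod.fst := by rw [hX]; simp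
  obtain ⟨p, hpS, hap⟩ := Finset.mem_biUnion.1 ha
  have hp1 : p.1 ⊆ ({a} : Finset V) := hX ▸ Finset.subset_biUnion_of_mem Prod.fst hpS
  have hp2 : p.2 ⊆ ({c} : Finset V) := hY ▸ Finset.subset_biUnion_of_mem Prod.snd hpS
  obtain ⟨⟨_, _, hspan⟩, hss⟩ := hS p hpS
  by_cases hc : c ∈ p.2
  · refine hss.not_subset ?_
    intro v hv
    simp only [Finset.mem_union, Finset.mem_singleton] at hv ⊢
    rcases hv with rfl | rfl
    exacts [Or.inl hap, Or.inr hc]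
  · have hp2e : p.2 = ∅ := by
      rw [Finset.eq_empty_iff_forall_notMem]
      intro v hv
      exact hc (Finset.mem_singleton.1 (hp2 hv) ▸ hv)
    have hbot : Submodule.span ℝ (z '' (p.2 : Set V)) = ⊥ := by rw [hp2e]; simp
    have hza : z a ∈ Submodule.span ℝ (z '' (p.2 : Set V)) := hspan ▸ mem_span_img z hap
    rw [hbot, Submodule.mem_bot] at hza
    exact H6 hza

end DecompAux

open DecompAux

/-- Non-uniqueness of the decomposition of a match into simple matches. -/
theorem decomposition_not_unique (x₁ x₂ x₃ y₁ y₂ y₃ : V)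
    (hnd : ([x₁, x₂, x₃, y₁, y₂, y₃] : List V).Nodup)
    (z : V → EuclideanSpace ℝ (Fin 2))
    (hx1 : z x₁ = (WithLp.equiv 2 (Fin 2 → ℝ)).symm ![0, 1])
    (hy1 : z y₁ = (WithLp.equiv 2 (Fin 2 → ℝ)).symm ![1, 0])
    (hx2 : z x₂ = (WithLp.equiv 2 (Fin 2 → ℝ)).symm ![1, 1])
    (hy2 : z y₂ = (WithLp.equiv 2 (Fin 2 → ℝ)).symm ![1, 1])
    (hx3 : z x₃ = (WithLp.equiv 2 (Fin 2 → ℝ)).symm ![1, -1])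
    (hy3 : z y₃ = (WithLp.equiv 2 (Fin 2 → ℝ)).symm ![1, -1]) :
    IsSimpleExactMatch 2 z {x₁, x₂, x₃} {y₁, y₂, y₃} {x₁, x₂} {y₁, y₂} ∧
    IsSimpleExactMatch 2 z {x₁, x₂, x₃} {y₁, y₂, y₃} {x₃} {y₃} ∧
    IsSimpleExactMatch 2 z {x₁, x₂, x₃} {y₁, y₂, y₃} {x₁, x₃} {y₁, y₃} ∧
    IsSimpleExactMatch 2 z {x₁, x₂, x₃} {y₁, y₂, y₃} {x₂} {y₂} ∧
    IsExactMatch 2 z {x₁, x₂, x₃} {y₁, y₂, y₃} {x₁, x₂, x₃} {y₁, y₂, y₃} ∧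
    (({x₁, x₂} ∪ {x₃} : Finset V) = {x₁, x₂, x₃} ∧
      ({y₁, y₂} ∪ {y₃} : Finset V) = {y₁, y₂, y₃}) ∧
    (({x₁, x₃} ∪ {x₂} : Finset V) = {x₁, x₂, x₃} ∧
      ({y₁, y₃} ∪ {y₂} : Finset V) = {y₁, y₂, y₃}) ∧
    ((({x₁, x₂} : Finset V), ({y₁, y₂} : Finset V)) ≠ (({x₁, x₃} : Finset V), ({y₁, y₃} : Finset V))) := by
    classical
  have h12 : x₁ ≠ x₂ := by simp at hnd; tauto
  have h23 : x₂ ≠ x₃ := by simp at hnd; tauto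
  -- span facts
  have c12 : Submodule.span ℝ ({z x₁, z x₂} : Set E2) = ⊤ := by
    rw [hx1, hx2]; exact span_pair_top _ _ (by norm_num [eval_symm])
  have c12' : Submodule.span ℝ ({z y₁, z y₂} : Set E2) = ⊤ := by
    rw [hy1, hy2]; exact span_pair_top _ _ (by norm_num [eval_symm])
  have c13 : Submodule.span ℝ ({z x₁, z x₃} : Set E2) = ⊤ := by
    rw [hx1, hx3]; exact span_pair_top _ _ (by norm_num [eval_symm])
  have c13' : Submodule.span ℝ ({z y₁, z y₃} : Set E2) = ⊤ := by
    rw [hy1, hy3]; exact span_pair_top _ _ (by norm_num [eval_symm])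
  have hx1ne : z x₁ ≠ 0 := by
    rw [hx1]; exact ne_zero_of _ 1 (by norm_num [eval_symm])
  have hx2ne : z x₂ ≠ 0 := by
    rw [hx2]; exact ne_zero_of _ 0 (by norm_num [eval_symm])
  have hx3ne : z x₃ ≠ 0 := by
    rw [hx3]; exact ne_zero_of _ 0 (by norm_num [eval_symm])
  refine ⟨?_, ?_, ?_, ?_, ?_, ⟨?_, ?_⟩, ⟨?_, ?_⟩, ?_⟩
  · -- simple match ({x₁,x₂},{y₁,y₂})
    refine ⟨⟨by intro v hv; simp at hv ⊢; tauto, by intro v hv; simp at hv ⊢; tauto, ?_⟩,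
      ⟨x₁, by simp⟩, ?_⟩
    · simp only [Finset.coe_insert, Set.image_insert_eq, Finset.coe_singleton,
        Set.image_singleton]
      rw [c12, c12']
    · exact pair_not_decomposable z _ _ x₁ x₂ y₁ y₂ c12
        (by rw [hy1, hy2]; exact not_mem_span_single _ _ (by norm_num [eval_symm]))
        (by rw [hy1, hy2]; exact not_mem_span_single _ _ (by norm_num [eval_symm]))
        (by rw [hy1, hx1]; exact not_mem_span_single _ _ (by norm_num [eval_symm]))
        (by rw [hy2, hx1]; exact not_mem_span_single _ _ (by norm_num [eval_symm]))
        hx1ne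
  · -- simple match ({x₃},{y₃})
    refine ⟨⟨by intro v hv; simp at hv ⊢; tauto, by intro v hv; simp at hv ⊢; tauto, ?_⟩,
      ⟨x₃, by simp⟩, single_not_decomposable z _ _ x₃ y₃ hx3ne⟩
    simp only [Finset.coe_singleton, Set.image_singleton]
    rw [hx3, hy3]
  · -- simple match ({x₁,x₃},{y₁,y₃})
    refine ⟨⟨by intro v hv; simp at hv ⊢; tauto, by intro v hv; simp at hv ⊢; tauto, ?_⟩,
      ⟨x₁, by simp⟩, ?_⟩
    · simp only [Finset.coe_insert, Set.image_insert_eq, Finset.coe_singleton,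
        Set.image_singleton]
      rw [c13, c13']
    · exact pair_not_decomposable z _ _ x₁ x₃ y₁ y₃ c13
        (by rw [hy1, hy3]; exact not_mem_span_single _ _ (by norm_num [eval_symm]))
        (by rw [hy1, hy3]; exact not_mem_span_single _ _ (by norm_num [eval_symm]))
        (by rw [hy1, hx1]; exact not_mem_span_single _ _ (by norm_num [eval_symm]))
        (by rw [hy3, hx1]; exact not_mem_span_single _ _ (by norm_num [eval_symm]))
        hx1ne
  · -- simple match ({x₂},{y₂})
    refine ⟨⟨by intro v hv; simp at hv ⊢; tauto, by intro v hv; simp at hv ⊢; tauto, ?_⟩,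
      ⟨x₂, by simp⟩, single_not_decomposable z _ _ x₂ y₂ hx2ne⟩
    simp only [Finset.coe_singleton, Set.image_singleton]
    rw [hx2, hy2]
  · -- full exact match
    refine ⟨le_refl _, le_refl _, ?_⟩
    simp only [Finset.coe_insert, Set.image_insert_eq, Finset.coe_singleton,
      Set.image_singleton]
    have t1 : Submodule.span ℝ ({z x₁, z x₂, z x₃} : Set E2) = ⊤ := by
      rw [eq_top_iff, ← c12]
      exact Submodule.span_mono (by intro w hw; simp at hw ⊢; tauto)
    have t2 : Submodule.span ℝ ({z y₁, z y₂, z y₃} : Set E2) = ⊤ := by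
      rw [eq_top_iff, ← c12']
      exact Submodule.span_mono (by intro w hw; simp at hw ⊢; tauto)
    rw [t1, t2]
  · ext v; simp; try tauto
  · ext v; simp; try tauto
  · ext v; simp; try tauto
  · ext v; simp; try tauto
  · intro h
    have h1 : ({x₁, x₂} : Finset V) = {x₁, x₃} := congrArg Prod.fst h
    have : x₂ ∈ ({x₁, x₃} : Finset V) := h1 ▸ (by simp)
    simp only [Finset.mem_insert, Finset.mem_singleton] at this
    rcases this with h2 | h2
    · exact h12 h2.symm
    · exact h23 h2
end

section
/- Properties of the recursively defined sign matrices: define square matrices A_n over ℝ for n a power of 2 by A₁ = [1] and A_{2m} = [[A_m, A_m], [−A_mᵀ, A_mᵀ]] (in 2×2 block form). Then for every n = 2^k: (i) A_n A_nᵀ = A_nᵀ A_n = n·I_n, (ii) A_n + A_nᵀ = 2·I_n, and (iii) every diagonal entry of A_n equals 1. -/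
open Matrix

/-- The recursively defined sign matrices: `A 1 = [1]` and
`A (2m) = [[A m, A m], [-(A m)ᵀ, (A m)ᵀ]]` in block form. -/
noncomputable def signMatrix : (k : ℕ) → Matrix (Fin (2 ^ k)) (Fin (2 ^ k)) ℝ
  | 0 => 1
  | k + 1 =>
      Matrix.reindex (finSumFinEquiv.trans (finCongr (by ring)))
        (finSumFinEquiv.trans (finCongr (by ring)))
        (Matrix.fromBlocks (signMatrix k) (signMatrix k)
          (-(signMatrix k)ᵀ) (signMatrix k)ᵀ)

/-- Properties of the sign matrices: `AₙAₙᵀ = AₙᵀAₙ = n·I`, `Aₙ + Aₙᵀ = 2·I`, and all diagonal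
entries of `Aₙ` equal 1, where `n = 2 ^ k`. -/
theorem signMatrix_props (k : ℕ) :
    signMatrix k * (signMatrix k)ᵀ = ((2 : ℝ) ^ k) • (1 : Matrix (Fin (2 ^ k)) (Fin (2 ^ k)) ℝ) ∧
    (signMatrix k)ᵀ * signMatrix k = ((2 : ℝ) ^ k) • (1 : Matrix (Fin (2 ^ k)) (Fin (2 ^ k)) ℝ) ∧
    signMatrix k + (signMatrix k)ᵀ = (2 : ℝ) • (1 : Matrix (Fin (2 ^ k)) (Fin (2 ^ k)) ℝ) ∧
    ∀ i, signMatrix k i i = 1 := by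
  induction k with
  | zero =>
    refine ⟨by simp [signMatrix], by simp [signMatrix], ?_, fun i => by simp [signMatrix]⟩
    simp [signMatrix, two_smul]
  | succ k ih =>
    obtain ⟨h1, h2, h3, h4⟩ := ih
    set A := signMatrix k with hA
    set e : Fin (2 ^ k) ⊕ Fin (2 ^ k) ≃ Fin (2 ^ (k + 1)) :=
      finSumFinEquiv.trans (finCongr (by ring)) with he
    have hdef : signMatrix (k + 1) =
        Matrix.reindex e e (fromBlocks A A (-Aᵀ) Aᵀ) := rfl
    have hmul : ∀ M N : Matrix (Fin (2^k) ⊕ Fin (2^k)) (Fin (2^k) ⊕ Fin (2^k)) ℝ,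
        Matrix.reindex e e M * Matrix.reindex e e N = Matrix.reindex e e (M * N) := by
      intro M N
      simp [Matrix.reindex_apply, Matrix.submatrix_mul_equiv]
    have hone : Matrix.reindex e e (1 : Matrix (Fin (2^k) ⊕ Fin (2^k)) _ ℝ) = 1 := by
      simp [Matrix.reindex_apply, Matrix.submatrix_one_equiv]
    have hBt : (fromBlocks A A (-Aᵀ) Aᵀ)ᵀ = fromBlocks Aᵀ (-A) Aᵀ A := by
      simp [Matrix.fromBlocks_transpose]
    have honeB : (1 : Matrix (Fin (2^k) ⊕ Fin (2^k)) _ ℝ) = fromBlocks 1 0 0 1 :=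
      (Matrix.fromBlocks_one).symm
    have hBB : fromBlocks A A (-Aᵀ) Aᵀ * fromBlocks Aᵀ (-A) Aᵀ A =
        ((2:ℝ) ^ (k+1)) • (1 : Matrix (Fin (2^k) ⊕ Fin (2^k)) _ ℝ) := by
      rw [Matrix.fromBlocks_multiply, honeB, Matrix.fromBlocks_smul, Matrix.fromBlocks_inj]
      refine ⟨?_, ?_, ?_, ?_⟩
      · rw [h1, ← add_smul]; congr 1; ring
      · simp [mul_neg]
      · simp [neg_mul]
      · rw [show -Aᵀ * -A = Aᵀ * A by simp, h2, ← add_smul]; congr 1; ring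
    have hBtB : fromBlocks Aᵀ (-A) Aᵀ A * fromBlocks A A (-Aᵀ) Aᵀ =
        ((2:ℝ) ^ (k+1)) • (1 : Matrix (Fin (2^k) ⊕ Fin (2^k)) _ ℝ) := by
      rw [Matrix.fromBlocks_multiply, honeB, Matrix.fromBlocks_smul, Matrix.fromBlocks_inj]
      refine ⟨?_, ?_, ?_, ?_⟩
      · rw [show (-A) * (-Aᵀ) = A * Aᵀ by simp, h1, h2, ← add_smul]; congr 1; ring
      · simp [neg_mul, h1, h2]
      · simp [mul_neg, h1, h2]
      · rw [h1, h2, ← add_smul]; congr 1; ring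
    have hsum : fromBlocks A A (-Aᵀ) Aᵀ + fromBlocks Aᵀ (-A) Aᵀ A =
        (2:ℝ) • (1 : Matrix (Fin (2^k) ⊕ Fin (2^k)) _ ℝ) := by
      rw [honeB, Matrix.fromBlocks_smul, Matrix.fromBlocks_add, Matrix.fromBlocks_inj]
      refine ⟨?_, ?_, ?_, ?_⟩
      · exact h3
      · simp
      · simp
      · rw [add_comm]; exact h3
    have hsmul : ∀ (c : ℝ) (M : Matrix (Fin (2^k) ⊕ Fin (2^k)) (Fin (2^k) ⊕ Fin (2^k)) ℝ),
        Matrix.reindex e e (c • M) = c • Matrix.reindex e e M := by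
      intro c M; simp [Matrix.reindex_apply, Matrix.submatrix_smul]
    have hadd : ∀ (M N : Matrix (Fin (2^k) ⊕ Fin (2^k)) (Fin (2^k) ⊕ Fin (2^k)) ℝ),
        Matrix.reindex e e (M + N) = Matrix.reindex e e M + Matrix.reindex e e N := by
      intro M N; simp [Matrix.reindex_apply, Matrix.submatrix_add]
    refine ⟨?_, ?_, ?_, ?_⟩
    · rw [hdef, Matrix.transpose_reindex, hBt, hmul, hBB, hsmul, hone]
    · rw [hdef, Matrix.transpose_reindex, hBt, hmul, hBtB, hsmul, hone]
    · rw [hdef, Matrix.transpose_reindex, hBt, ← hadd, hsum, hsmul, hone]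
    · intro i
      rw [hdef, Matrix.reindex_apply, Matrix.submatrix_apply]
      rcases h : e.symm i with a | a
      · simp [Matrix.fromBlocks, h4]
      · simp [Matrix.fromBlocks, h4]
end

section
/- The maximum match need not be a union of x-minimal matches over x ∈ 𝒳 alone: there exists ε₀ ∈ (0,1) such that for every ε ∈ (0, ε₀) the following holds. In ℝ³, let 𝒳 = {x₁,x₂}, 𝒴 = {y₁,y₂,y₃} with z_{x₁} = z_{y₁} = (√(1/2), √(1/2), 0), z_{x₂} = z_{y₂} = (√(1/2), −√(1/2), 0), and z_{y₃} = (√(1−ε²), 0, ε). Then (𝒳, 𝒴) is an ε-approximate match (hence the maximum match), the only x-minimal matches for x ∈ 𝒳 are ({x₁},{y₁}) and ({x₂},{y₂}), and therefore the union of all x-minimal matches over x ∈ 𝒳 equals (𝒳, {y₁,y₂}) ≠ (𝒳, 𝒴); in particular, no x-minimal match with x ∈ 𝒳 contains y₃. -/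
open RealInnerProductSpace

namespace MaxMatchAux

noncomputable abbrev E3 := EuclideanSpace ℝ (Fin 3)

lemma abs_inner_le_infDist_mul {d : ℕ} (w n : EuclideanSpace ℝ (Fin d))
    (S : Set (EuclideanSpace ℝ (Fin d))) (hS : ∀ s ∈ S, ⟪s, n⟫ = 0) :
    |⟪w, n⟫| ≤ Metric.infDist w (Submodule.span ℝ S : Set (EuclideanSpace ℝ (Fin d))) * ‖n‖ := by
  have hne : (Submodule.span ℝ S : Set (EuclideanSpace ℝ (Fin d))).Nonempty :=
    ⟨0, Submodule.zero_mem _⟩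
  have horth : ∀ u ∈ Submodule.span ℝ S, ⟪u, n⟫ = 0 := by
    intro u hu
    induction hu using Submodule.span_induction with
    | mem s hs => exact hS s hs
    | zero => simp
    | add u v _ _ hu hv => rw [inner_add_left, hu, hv]; ring
    | smul c u _ hu => rw [real_inner_smul_left, hu]; ring
  rcases eq_or_ne n 0 with rfl | hn
  · simp
  have hnpos : 0 < ‖n‖ := norm_pos_iff.2 hn
  rw [← div_le_iff₀ hnpos]
  by_contra hlt
  push_neg at hlt
  obtain ⟨u, hu, hdu⟩ := (Metric.infDist_lt_iff hne).1 hlt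
  have h1 : ⟪w, n⟫ = ⟪w - u, n⟫ := by rw [inner_sub_left, horth u hu]; ring
  have h2 : |⟪w - u, n⟫| ≤ ‖w - u‖ * ‖n‖ := abs_real_inner_le_norm _ _
  rw [h1, dist_eq_norm] at hdu; rw [lt_div_iff₀ hnpos] at hdu
  exact absurd (h2.trans_lt (by nlinarith)) (lt_irrefl _)

lemma inner3 (p q r s t u : ℝ) :
    ⟪((WithLp.equiv 2 (Fin 3 → ℝ)).symm ![p,q,r] : E3),
      (WithLp.equiv 2 (Fin 3 → ℝ)).symm ![s,t,u]⟫ = p*s + q*t + r*u := by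
  simp [PiLp.inner_apply, Fin.sum_univ_three, RCLike.inner_apply]; ring

lemma norm3 (p q r : ℝ) :
    ‖((WithLp.equiv 2 (Fin 3 → ℝ)).symm ![p,q,r] : E3)‖ = Real.sqrt (p^2+q^2+r^2) := by
  simp [EuclideanSpace.norm_eq, Fin.sum_univ_three]

lemma dist3 (p q r s t u : ℝ) :
    dist ((WithLp.equiv 2 (Fin 3 → ℝ)).symm ![p,q,r] : E3)
      ((WithLp.equiv 2 (Fin 3 → ℝ)).symm ![s,t,u]) =
      Real.sqrt ((p-s)^2+(q-t)^2+(r-u)^2) := by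
  simp [EuclideanSpace.dist_eq, Real.dist_eq, Fin.sum_univ_three, sq_abs]

lemma smul_add3 (c c' p q r s t u : ℝ) :
    (c • ((WithLp.equiv 2 (Fin 3 → ℝ)).symm ![p,q,r] : E3)
      + c' • (WithLp.equiv 2 (Fin 3 → ℝ)).symm ![s,t,u]) =
      (WithLp.equiv 2 (Fin 3 → ℝ)).symm ![c*p+c'*s, c*q+c'*t, c*r+c'*u] := by
  ext i
  fin_cases i <;> simp [PiLp.add_apply, PiLp.smul_apply]

end MaxMatchAux

variable {V : Type*} [DecidableEq V]

set_option maxHeartbeats 2000000 in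
open MaxMatchAux in
/-- The maximum match need not be the union of the `x`-minimal matches over `x ∈ 𝒳` alone. -/
theorem max_match_not_union_of_x_minimal :
    ∃ ε₀ : ℝ, 0 < ε₀ ∧ ε₀ < 1 ∧ ∀ ε : ℝ, 0 < ε → ε < ε₀ →
      ∀ (W : Type) [DecidableEq W] (x₁ x₂ y₁ y₂ y₃ : W),
        ([x₁, x₂, y₁, y₂, y₃] : List W).Nodup →
        ∀ z : W → EuclideanSpace ℝ (Fin 3),
          z x₁ = (WithLp.equiv 2 (Fin 3 → ℝ)).symm ![Real.sqrt (1 / 2), Real.sqrt (1 / 2), 0] →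
          z y₁ = (WithLp.equiv 2 (Fin 3 → ℝ)).symm ![Real.sqrt (1 / 2), Real.sqrt (1 / 2), 0] →
          z x₂ = (WithLp.equiv 2 (Fin 3 → ℝ)).symm ![Real.sqrt (1 / 2), -Real.sqrt (1 / 2), 0] →
          z y₂ = (WithLp.equiv 2 (Fin 3 → ℝ)).symm ![Real.sqrt (1 / 2), -Real.sqrt (1 / 2), 0] →
          z y₃ = (WithLp.equiv 2 (Fin 3 → ℝ)).symm ![Real.sqrt (1 - ε ^ 2), 0, ε] →
          (IsApproxMatch 3 ε z {x₁, x₂} {y₁, y₂, y₃} {x₁, x₂} {y₁, y₂, y₃} ∧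
            ∀ X Y : Finset W, IsApproxMatch 3 ε z {x₁, x₂} {y₁, y₂, y₃} X Y →
              X ⊆ {x₁, x₂} ∧ Y ⊆ {y₁, y₂, y₃}) ∧
          (∀ X Y : Finset W,
            (∃ x ∈ ({x₁, x₂} : Finset W),
                IsMinimalMatchFor 3 ε z {x₁, x₂} {y₁, y₂, y₃} x X Y) ↔
              (X = {x₁} ∧ Y = {y₁}) ∨ (X = {x₂} ∧ Y = {y₂})) ∧
          (({x₁} ∪ {x₂} : Finset W) = {x₁, x₂} ∧
            ({y₁} ∪ {y₂} : Finset W) = {y₁, y₂} ∧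
            ({y₁, y₂} : Finset W) ≠ {y₁, y₂, y₃}) ∧
          (∀ x ∈ ({x₁, x₂} : Finset W), ∀ X Y : Finset W,
            IsMinimalMatchFor 3 ε z {x₁, x₂} {y₁, y₂, y₃} x X Y → y₃ ∉ Y) := by
  refine ⟨1/2, by norm_num, by norm_num, ?_⟩
  intro ε hε0 hεlt W _ x₁ x₂ y₁ y₂ y₃ hnd z hx1 hy1 hx2 hy2 hy3
  have hε1 : ε < 1 := by linarith
  simp only [List.nodup_cons, List.mem_cons, List.mem_singleton, List.not_mem_nil,
    List.nodup_nil, and_true, or_false, not_or] at hnd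
  obtain ⟨⟨h12, h11', h12', h13'⟩, ⟨h21', h22', h23'⟩, ⟨hy12, hy13⟩, hy23, -⟩ := hnd
  -- basic scalars
  set a : ℝ := Real.sqrt (1/2) with ha_def
  set b : ℝ := Real.sqrt (1 - ε^2) with hb_def
  have ha2 : a^2 = 1/2 := Real.sq_sqrt (by norm_num)
  have ha0 : 0 < a := Real.sqrt_pos.2 (by norm_num)
  have hb2 : b^2 = 1 - ε^2 := Real.sq_sqrt (by nlinarith)
  have hb0 : 0 ≤ b := Real.sqrt_nonneg _
  -- norms
  have hnx1 : ‖z x₁‖ = 1 := by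
    rw [hx1, norm3]; rw [show a^2+a^2+(0:ℝ)^2 = 1 by nlinarith]; exact Real.sqrt_one
  have hnx2 : ‖z x₂‖ = 1 := by
    rw [hx2, norm3]; rw [show a^2+(-a)^2+(0:ℝ)^2 = 1 by nlinarith]; exact Real.sqrt_one
  have hny3 : ‖z y₃‖ = 1 := by
    rw [hy3, norm3]; rw [show b^2+(0:ℝ)^2+ε^2 = 1 by nlinarith]; exact Real.sqrt_one
  have hzy1x1 : z y₁ = z x₁ := by rw [hy1, hx1]
  have hzy2x2 : z y₂ = z x₂ := by rw [hy2, hx2]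
  -- a point of a set is within 0
  have hmem_le : ∀ (w : E3) (S : Set E3) (c : ℝ), 0 ≤ c → w ∈ S →
      Metric.infDist w (Submodule.span ℝ S : Set E3) ≤ c := by
    intro w S c hc hw
    have : Metric.infDist w (Submodule.span ℝ S : Set E3) = 0 :=
      Metric.infDist_zero_of_mem (Submodule.subset_span hw)
    rw [this]; exact hc
  -- key lemma 1 : any match containing x₁ contains y₁
  have key1 : ∀ X Y : Finset W, IsApproxMatch 3 ε z {x₁, x₂} {y₁, y₂, y₃} X Y →
      x₁ ∈ X → y₁ ∈ Y := by
    intro X Y hm hx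
    by_contra hy
    set n : E3 := (WithLp.equiv 2 (Fin 3 → ℝ)).symm ![-(a*ε), -(a*ε), a*b] with hn_def
    have horth : ∀ s ∈ z '' (Y : Set W), ⟪s, n⟫ = 0 := by
      rintro s ⟨w, hw, rfl⟩
      have hwY : w ∈ ({y₁, y₂, y₃} : Finset W) := hm.2.1 hw
      simp only [Finset.mem_insert, Finset.mem_singleton] at hwY
      rcases hwY with rfl | rfl | rfl
      · exact absurd hw hy
      · rw [hy2, hn_def, inner3]; ring
      · rw [hy3, hn_def, inner3]; ring
    have hlow := abs_inner_le_infDist_mul (z x₁) n _ horth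
    have hinner : ⟪z x₁, n⟫ = -ε := by
      rw [hx1, hn_def, inner3]; nlinarith
    have hnn : ‖n‖^2 = (1+ε^2)/2 := by
      rw [hn_def, norm3, Real.sq_sqrt (by positivity)]; nlinarith
    have hnlt : ‖n‖ < 1 := by nlinarith [norm_nonneg n, sq_nonneg (‖n‖ + 1)]
    have hupp := hm.2.2.1 x₁ hx
    rw [hnx1, mul_one] at hupp
    rw [hinner] at hlow
    have habs : |(-ε)| = ε := by rw [abs_neg, abs_of_pos hε0]
    rw [habs] at hlow
    have hD0 : 0 ≤ Metric.infDist (z x₁)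
        (Submodule.span ℝ (z '' (Y : Set W)) : Set E3) := Metric.infDist_nonneg
    generalize hDq : Metric.infDist (z x₁)
        (Submodule.span ℝ (z '' (Y : Set W)) : Set E3) = D at hlow hupp hD0
    have hN0 : 0 ≤ ‖n‖ := norm_nonneg n
    generalize hNq : ‖n‖ = N at hlow hnlt hN0
    nlinarith [mul_le_mul_of_nonneg_right hupp hN0, mul_lt_mul_of_pos_left hnlt hε0]
  -- key lemma 2 : any match containing x₂ contains y₂
  have key2 : ∀ X Y : Finset W, IsApproxMatch 3 ε z {x₁, x₂} {y₁, y₂, y₃} X Y →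
      x₂ ∈ X → y₂ ∈ Y := by
    intro X Y hm hx
    by_contra hy
    set n : E3 := (WithLp.equiv 2 (Fin 3 → ℝ)).symm ![a*ε, -(a*ε), -(a*b)] with hn_def
    have horth : ∀ s ∈ z '' (Y : Set W), ⟪s, n⟫ = 0 := by
      rintro s ⟨w, hw, rfl⟩
      have hwY : w ∈ ({y₁, y₂, y₃} : Finset W) := hm.2.1 hw
      simp only [Finset.mem_insert, Finset.mem_singleton] at hwY
      rcases hwY with rfl | rfl | rfl
      · rw [hy1, hn_def, inner3]; ring
      · exact absurd hw hy
      · rw [hy3, hn_def, inner3]; ring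
    have hlow := abs_inner_le_infDist_mul (z x₂) n _ horth
    have hinner : ⟪z x₂, n⟫ = ε := by
      rw [hx2, hn_def, inner3]; nlinarith
    have hnn : ‖n‖^2 = (1+ε^2)/2 := by
      rw [hn_def, norm3, Real.sq_sqrt (by positivity)]; nlinarith
    have hnlt : ‖n‖ < 1 := by nlinarith [norm_nonneg n, sq_nonneg (‖n‖ + 1)]
    have hupp := hm.2.2.1 x₂ hx
    rw [hnx2, mul_one] at hupp
    rw [hinner, abs_of_pos hε0] at hlow
    have hD0 : 0 ≤ Metric.infDist (z x₂)
        (Submodule.span ℝ (z '' (Y : Set W)) : Set E3) := Metric.infDist_nonneg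
    generalize hDq : Metric.infDist (z x₂)
        (Submodule.span ℝ (z '' (Y : Set W)) : Set E3) = D at hlow hupp hD0
    have hN0 : 0 ≤ ‖n‖ := norm_nonneg n
    generalize hNq : ‖n‖ = N at hlow hnlt hN0
    nlinarith [mul_le_mul_of_nonneg_right hupp hN0, mul_lt_mul_of_pos_left hnlt hε0]
  -- the small matches
  have m1 : IsApproxMatch 3 ε z {x₁, x₂} {y₁, y₂, y₃} {x₁} {y₁} := by
    refine ⟨by simp, by simp, ?_, ?_⟩
    · intro x hx
      rw [Finset.mem_singleton] at hx; subst hx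
      refine hmem_le _ _ _ (by positivity) ?_; exact ⟨y₁, by simp, hzy1x1⟩
    · intro y hy
      rw [Finset.mem_singleton] at hy; subst hy
      refine hmem_le _ _ _ (by positivity) ?_; exact ⟨x₁, by simp, hzy1x1.symm⟩
  have m2 : IsApproxMatch 3 ε z {x₁, x₂} {y₁, y₂, y₃} {x₂} {y₂} := by
    refine ⟨by simp, by simp, ?_, ?_⟩
    · intro x hx
      rw [Finset.mem_singleton] at hx; subst hx
      refine hmem_le _ _ _ (by positivity) ?_; exact ⟨y₂, by simp, hzy2x2⟩
    · intro y hy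
      rw [Finset.mem_singleton] at hy; subst hy
      refine hmem_le _ _ _ (by positivity) ?_; exact ⟨x₂, by simp, hzy2x2.symm⟩
  -- the big match
  have mA : IsApproxMatch 3 ε z {x₁, x₂} {y₁, y₂, y₃} {x₁, x₂} {y₁, y₂, y₃} := by
    refine ⟨Finset.Subset.refl _, Finset.Subset.refl _, ?_, ?_⟩
    · intro x hx
      simp only [Finset.mem_insert, Finset.mem_singleton] at hx
      rcases hx with rfl | rfl
      · refine hmem_le _ _ _ (by positivity) ?_; exact ⟨y₁, by simp, hzy1x1⟩
      · refine hmem_le _ _ _ (by positivity) ?_; exact ⟨y₂, by simp, hzy2x2⟩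
    · intro yv hyv
      simp only [Finset.mem_insert, Finset.mem_singleton] at hyv
      rcases hyv with h | h | h <;> subst h
      · refine hmem_le _ _ _ (by positivity) ?_; exact ⟨x₁, by simp, hzy1x1.symm⟩
      · refine hmem_le _ _ _ (by positivity) ?_; exact ⟨x₂, by simp, hzy2x2.symm⟩
      · -- distance of z y₃ to the span is at most ε
        set c : ℝ := b / (2*a) with hc_def
        set p : E3 := c • z x₁ + c • z x₂ with hp_def
        have hpmem : p ∈ (Submodule.span ℝ (z '' (({x₁, x₂} : Finset W) : Set W)) : Set E3) := by
          exact Submodule.add_mem _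
            (Submodule.smul_mem _ _ (Submodule.subset_span ⟨x₁, by simp, rfl⟩))
            (Submodule.smul_mem _ _ (Submodule.subset_span ⟨x₂, by simp, rfl⟩))
        have hpval : p = (WithLp.equiv 2 (Fin 3 → ℝ)).symm ![b, 0, 0] := by
          rw [hp_def, hx1, hx2, smul_add3]
          congr 1
          have h1 : c*a + c*a = b := by rw [hc_def]; field_simp; ring
          have h2 : c*a + c*(-a) = 0 := by ring
          have h3 : c*0 + c*0 = (0:ℝ) := by ring
          rw [h1, h2, h3]
        have hdist : dist (z yv) p = ε := by
          rw [hy3, hpval, dist3]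
          rw [show (b-b)^2 + ((0:ℝ)-0)^2 + (ε-0)^2 = ε^2 by ring]
          exact Real.sqrt_sq hε0.le
        calc Metric.infDist (z yv) (Submodule.span ℝ (z '' (({x₁, x₂} : Finset W) : Set W)) : Set E3)
            ≤ dist (z yv) p := Metric.infDist_le_dist_of_mem hpmem
          _ = ε := hdist
          _ = ε * ‖z yv‖ := by rw [hny3, mul_one]
  -- x₁ not in 𝒴, helper for membership
  have hx1X : ∀ X Y : Finset W, IsApproxMatch 3 ε z {x₁, x₂} {y₁, y₂, y₃} X Y →
      x₁ ∈ X ∪ Y → x₁ ∈ X := by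
    intro X Y hm hmem
    rcases Finset.mem_union.1 hmem with h | h
    · exact h
    · have := hm.2.1 h
      simp only [Finset.mem_insert, Finset.mem_singleton] at this
      rcases this with rfl | rfl | rfl
      · exact absurd rfl h11'
      · exact absurd rfl h12'
      · exact absurd rfl h13'
  have hx2X : ∀ X Y : Finset W, IsApproxMatch 3 ε z {x₁, x₂} {y₁, y₂, y₃} X Y →
      x₂ ∈ X ∪ Y → x₂ ∈ X := by
    intro X Y hm hmem
    rcases Finset.mem_union.1 hmem with h | h
    · exact h
    · have := hm.2.1 h
      simp only [Finset.mem_insert, Finset.mem_singleton] at this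
      rcases this with rfl | rfl | rfl
      · exact absurd rfl h21'
      · exact absurd rfl h22'
      · exact absurd rfl h23'
  -- minimal matches
  have min1 : IsMinimalMatchFor 3 ε z {x₁, x₂} {y₁, y₂, y₃} x₁ {x₁} {y₁} := by
    refine ⟨m1, by simp, ?_⟩
    intro X Y hm hX hY hmem
    have hxX : x₁ ∈ X := hx1X X Y hm hmem
    have hXeq : X = {x₁} := Finset.Subset.antisymm hX (Finset.singleton_subset_iff.2 hxX)
    have hyY : y₁ ∈ Y := key1 X Y hm hxX
    exact ⟨hXeq, Finset.Subset.antisymm hY (Finset.singleton_subset_iff.2 hyY)⟩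
  have min2 : IsMinimalMatchFor 3 ε z {x₁, x₂} {y₁, y₂, y₃} x₂ {x₂} {y₂} := by
    refine ⟨m2, by simp, ?_⟩
    intro X Y hm hX hY hmem
    have hxX : x₂ ∈ X := hx2X X Y hm hmem
    have hXeq : X = {x₂} := Finset.Subset.antisymm hX (Finset.singleton_subset_iff.2 hxX)
    have hyY : y₂ ∈ Y := key2 X Y hm hxX
    exact ⟨hXeq, Finset.Subset.antisymm hY (Finset.singleton_subset_iff.2 hyY)⟩
  -- classification of minimal matches
  have classif : ∀ X Y : Finset W,
      (∃ x ∈ ({x₁, x₂} : Finset W),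
          IsMinimalMatchFor 3 ε z {x₁, x₂} {y₁, y₂, y₃} x X Y) ↔
        (X = {x₁} ∧ Y = {y₁}) ∨ (X = {x₂} ∧ Y = {y₂}) := by
    intro X Y
    constructor
    · rintro ⟨x, hx, hmin⟩
      simp only [Finset.mem_insert, Finset.mem_singleton] at hx
      rcases hx with rfl | rfl
      · left
        have hxX : x ∈ X := hx1X X Y hmin.1 hmin.2.1
        have hyY : y₁ ∈ Y := key1 X Y hmin.1 hxX
        have := hmin.2.2 {x} {y₁} m1 (Finset.singleton_subset_iff.2 hxX)
          (Finset.singleton_subset_iff.2 hyY) (by simp)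
        exact ⟨this.1.symm, this.2.symm⟩
      · right
        have hxX : x ∈ X := hx2X X Y hmin.1 hmin.2.1
        have hyY : y₂ ∈ Y := key2 X Y hmin.1 hxX
        have := hmin.2.2 {x} {y₂} m2 (Finset.singleton_subset_iff.2 hxX)
          (Finset.singleton_subset_iff.2 hyY) (by simp)
        exact ⟨this.1.symm, this.2.symm⟩
    · rintro (⟨rfl, rfl⟩ | ⟨rfl, rfl⟩)
      · exact ⟨x₁, by simp, min1⟩
      · exact ⟨x₂, by simp, min2⟩
  refine ⟨⟨mA, fun X Y hm => ⟨hm.1, hm.2.1⟩⟩, classif, ⟨rfl, rfl, ?_⟩, ?_⟩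
  · intro h
    have : y₃ ∈ ({y₁, y₂} : Finset W) := h ▸ (by simp : y₃ ∈ ({y₁, y₂, y₃} : Finset W))
    simp only [Finset.mem_insert, Finset.mem_singleton] at this
    rcases this with rfl | rfl
    · exact hy13 rfl
    · exact hy23 rfl
  · intro x hx X Y hmin hy3Y
    have := (classif X Y).1 ⟨x, hx, hmin⟩
    rcases this with ⟨-, rfl⟩ | ⟨-, rfl⟩
    · rw [Finset.mem_singleton] at hy3Y; exact hy13 hy3Y.symm
    · rw [Finset.mem_singleton] at hy3Y; exact hy23 hy3Y.symm
end
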